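/- arXiv:1702.04824 — 8 statements merged into one kernel-verified Lean document; each statement's English description precedes it below -/
import Mathlib

section
/- Assume hypothesis (H). Given ε' > 0 and a compact set Ω ⊂ ℝ^{n+m}, there exist finitely many vectors w₁, …, w_ν ∈ ℝᵐ such that the following holds: for every (q,u) ∈ Ω and every p ∈ Γ(q,u) with |p| ≤ 1, there exist coefficients θ₁, …, θ_ν ∈ [0,1] with Σ_{i=1}^ν θ_i = 1 and | p − A(q,u) · Σ_{i=1}^ν θ_i ( w_iᵀ D(q,u) w_i ) | ≤ ε'. -/
open MeasureTheory Set

noncomputable section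

/-- Euclidean space `ℝᵏ`. -/
abbrev Euc (k : ℕ) : Type := EuclideanSpace ℝ (Fin k)

/-- `f` is absolutely continuous on `[a,b]` with (a.e.) derivative `f'`. -/
def AbsCont {F : Type*} [NormedAddCommGroup F] [NormedSpace ℝ F] (a b : ℝ)
    (f f' : ℝ → F) : Prop :=
  IntegrableOn f' (Icc a b) ∧ ∀ t ∈ Icc a b, f t = f a + ∫ s in a..t, f' s

/-- The cone `Γ(q,u)`: closed convex hull of `{A(q,u)(wᵀD(q,u)w) : w ∈ ℝᵐ}`. -/
def Gamma {n m : ℕ} (A : Euc n × Euc m → Euc n →L[ℝ] Euc n)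
    (D : Euc n × Euc m → Euc m →L[ℝ] Euc m →L[ℝ] Euc n)
    (z : Euc n × Euc m) : Set (Euc n) :=
  closure (convexHull ℝ {p : Euc n | ∃ w : Euc m, p = A z (D z w w)})

/-- Hypothesis (H). -/
structure HypH {n m : ℕ}
    (A : Euc n × Euc m → Euc n →L[ℝ] Euc n)
    (B : Euc n × Euc m → Euc n →L[ℝ] Euc n →L[ℝ] Euc n)
    (C : Euc n × Euc m → Euc n →L[ℝ] Euc m →L[ℝ] Euc n)
    (D : Euc n × Euc m → Euc m →L[ℝ] Euc m →L[ℝ] Euc n)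
    (K : Euc n × Euc m → Euc m →L[ℝ] Euc n) : Prop where
  lipA : LocallyLipschitz A
  lipB : LocallyLipschitz B
  lipC : LocallyLipschitz C
  lipD : LocallyLipschitz D
  lipK : LocallyLipschitz K
  diffK : Differentiable ℝ K
  lipK' : LocallyLipschitz (fderiv ℝ K)
  contGamma1 : ∀ z : Euc n × Euc m, ∀ ε > (0:ℝ), ∃ δ > (0:ℝ), ∀ z' : Euc n × Euc m,
    dist z' z < δ →
      Metric.hausdorffDist (Gamma A D z' ∩ Metric.closedBall 0 1)
        (Gamma A D z ∩ Metric.closedBall 0 1) < ε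

/-- `(q,p)` solves the control system (DE1) on `[0,T]` with control `u`. -/
def SolvesDE1 {n m : ℕ}
    (A : Euc n × Euc m → Euc n →L[ℝ] Euc n)
    (B : Euc n × Euc m → Euc n →L[ℝ] Euc n →L[ℝ] Euc n)
    (C : Euc n × Euc m → Euc n →L[ℝ] Euc m →L[ℝ] Euc n)
    (D : Euc n × Euc m → Euc m →L[ℝ] Euc m →L[ℝ] Euc n)
    (K : Euc n × Euc m → Euc m →L[ℝ] Euc n)
    (T : ℝ) (u : ℝ → Euc m) (q p : ℝ → Euc n) : Prop :=
  ∀ t ∈ Icc (0:ℝ) T,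
    HasDerivAt q (A (q t, u t) (p t) + K (q t, u t) (deriv u t)) t ∧
    HasDerivAt p (-((1:ℝ)/2) • B (q t, u t) (p t) (p t)
      - C (q t, u t) (p t) (deriv u t)
      + D (q t, u t) (deriv u t) (deriv u t)) t


/-
Each `Γ₁(z) = Γ(z) ∩ B̄(0,1)` is compact and lies in the closed convex hull of the generators
`A(z)(wᵀD(z)w)`, so finitely many generators already approximate all of `Γ₁(z)` up to `ε`.
By continuity of the generators and Hausdorff continuity of `Γ₁`, the same finite set works up to
`3ε` for all `z'` near `z`, and compactness of `Ω` lets us take the union of finitely many such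
sets.
-/

open Metric Filter Topology

section ConvexHull

variable {E : Type*} [NormedAddCommGroup E] [NormedSpace ℝ E]

theorem convexHull_range_eq_image_stdSimplex {ι : Type*} [Fintype ι] (v : ι → E) :
    convexHull ℝ (range v) = (fun θ : ι → ℝ => ∑ i, θ i • v i) '' stdSimplex ℝ ι := by
  classical
  let L : (ι → ℝ) →ₗ[ℝ] E := Fintype.linearCombination ℝ v
  change _ = L '' _
  rw [← convexHull_rangle_single_eq_stdSimplex, LinearMap.image_convexHull, ← range_comp]
  congr 2
  ext i
  simp [L, Fintype.linearCombination_apply, Pi.single_apply]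

theorem convexHull_range_subset_iUnion_finset {ι : Type*} (f : ι → E) :
    convexHull ℝ (range f) ⊆ ⋃ W : Finset ι, convexHull ℝ (f '' W) := by
  classical
  rw [convexHull_eq_union_convexHull_finite_subsets]
  refine iUnion₂_subset fun t ht => ?_
  rw [← image_univ] at ht
  obtain ⟨W, -, rfl⟩ := Finset.subset_set_image_iff.1 ht
  exact subset_iUnion_of_subset W (by rw [Finset.coe_image])

theorem convexHull_image_subset_thickening {ι : Type*} {f f' : ι → E} {s : Set ι} {ε : ℝ}
    (h : ∀ i ∈ s, dist (f i) (f' i) < ε) :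
    convexHull ℝ (f '' s) ⊆ thickening ε (convexHull ℝ (f' '' s)) :=
  convexHull_min
    (image_subset_iff.2 fun i hi => mem_thickening_iff.2
      ⟨f' i, subset_convexHull ℝ _ (mem_image_of_mem f' hi), h i hi⟩)
    ((convex_convexHull ℝ _).thickening ε)

theorem IsCompact.exists_finset_subset_thickening_convexHull {ι : Type*} {K : Set E}
    (hK : IsCompact K) {f : ι → E} (hKf : K ⊆ closure (convexHull ℝ (range f))) {ε : ℝ}
    (hε : 0 < ε) : ∃ W : Finset ι, K ⊆ thickening ε (convexHull ℝ (f '' W)) := by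
  classical
  have hmono : Monotone fun W : Finset ι => thickening ε (convexHull ℝ (f '' W)) :=
    fun _ _ h => thickening_subset_of_subset ε <|
      convexHull_mono (image_mono (Finset.coe_subset.2 h))
  refine hK.elim_directed_cover _ (fun _ => isOpen_thickening) ?_ hmono.directed_le
  calc K ⊆ closure (convexHull ℝ (range f)) := hKf
    _ ⊆ thickening ε (convexHull ℝ (range f)) := closure_subset_thickening hε _
    _ ⊆ thickening ε (⋃ W : Finset ι, convexHull ℝ (f '' W)) :=
      thickening_subset_of_subset ε (convexHull_range_subset_iUnion_finset f)
    _ = ⋃ W : Finset ι, thickening ε (convexHull ℝ (f '' W)) := thickening_iUnion _ _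

end ConvexHull

theorem Metric.subset_thickening_of_hausdorffDist_lt {X : Type*} [PseudoMetricSpace X]
    {s t : Set X} {ε : ℝ} (hs : Bornology.IsBounded s) (ht : Bornology.IsBounded t)
    (ht₀ : t.Nonempty) (h : hausdorffDist s t < ε) : s ⊆ thickening ε t := fun _ hx =>
  mem_thickening_iff.2 <| exists_dist_lt_of_hausdorffDist_lt hx h
    (hausdorffEDist_ne_top_of_nonempty_of_bounded ⟨_, hx⟩ ht₀ hs ht)

namespace Gamma

variable {n m : ℕ} (A : Euc n × Euc m → Euc n →L[ℝ] Euc n)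
    (D : Euc n × Euc m → Euc m →L[ℝ] Euc m →L[ℝ] Euc n)

def generator (z : Euc n × Euc m) (w : Euc m) : Euc n := A z (D z w w)

def unitPart (z : Euc n × Euc m) : Set (Euc n) := Gamma A D z ∩ closedBall 0 1

theorem eq_closure_convexHull_range (z : Euc n × Euc m) :
    Gamma A D z = closure (convexHull ℝ (range (generator A D z))) := by
  simp only [Gamma, generator, range, eq_comm]

theorem zero_mem_unitPart (z : Euc n × Euc m) : (0 : Euc n) ∈ unitPart A D z :=
  ⟨subset_closure (subset_convexHull ℝ _ ⟨0, by simp⟩), mem_closedBall_self zero_le_one⟩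

theorem isCompact_unitPart (z : Euc n × Euc m) : IsCompact (unitPart A D z) :=
  (isCompact_closedBall 0 1).inter_left isClosed_closure

theorem eventually_unitPart_subset_thickening (hA : Continuous A) (hD : Continuous D)
    (hΓ : ∀ z, ∀ ε > (0 : ℝ), ∃ δ > (0 : ℝ), ∀ z', dist z' z < δ →
      hausdorffDist (unitPart A D z') (unitPart A D z) < ε)
    (z : Euc n × Euc m) {ε : ℝ} (hε : 0 < ε) :
    ∃ W : Finset (Euc m), ∀ᶠ z' in 𝓝 z,
      unitPart A D z' ⊆ thickening (ε + ε + ε) (convexHull ℝ (generator A D z' '' W)) := by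
  obtain ⟨W, hW⟩ := (isCompact_unitPart A D z).exists_finset_subset_thickening_convexHull
    (fun p hp => eq_closure_convexHull_range A D z ▸ hp.1) hε
  refine ⟨W, ?_⟩
  obtain ⟨δ, hδ, hΓz⟩ := hΓ z ε hε
  have hgen : ∀ᶠ z' in 𝓝 z, ∀ w ∈ W, dist (generator A D z w) (generator A D z' w) < ε := by
    refine (Finset.eventually_all W).2 fun w _ => ?_
    have hcont : Continuous fun ζ => generator A D ζ w :=
      hA.clm_apply ((hD.clm_apply continuous_const).clm_apply continuous_const)
    exact (hcont.continuousAt.eventually (ball_mem_nhds _ hε)).mono fun _ h => mem_ball'.1 h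
  filter_upwards [ball_mem_nhds z hδ, hgen] with z' hz' hgen'
  have hbdd : ∀ ζ, Bornology.IsBounded (unitPart A D ζ) := fun ζ =>
    isBounded_closedBall.subset inter_subset_right
  calc unitPart A D z'
      ⊆ thickening ε (unitPart A D z) := subset_thickening_of_hausdorffDist_lt (hbdd z')
        (hbdd z) ⟨0, zero_mem_unitPart A D z⟩ (hΓz z' hz')
    _ ⊆ thickening ε (thickening ε (convexHull ℝ (generator A D z '' W))) :=
      thickening_subset_of_subset ε hW
    _ ⊆ thickening (ε + ε) (convexHull ℝ (generator A D z '' W)) :=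
      thickening_thickening_subset _ _ _
    _ ⊆ thickening (ε + ε) (thickening ε (convexHull ℝ (generator A D z' '' W))) :=
      thickening_subset_of_subset _ (convexHull_image_subset_thickening hgen')
    _ ⊆ thickening (ε + ε + ε) (convexHull ℝ (generator A D z' '' W)) :=
      thickening_thickening_subset _ _ _

theorem exists_finset_forall_unitPart_subset_thickening (hA : Continuous A) (hD : Continuous D)
    (hΓ : ∀ z, ∀ ε > (0 : ℝ), ∃ δ > (0 : ℝ), ∀ z', dist z' z < δ →
      hausdorffDist (unitPart A D z') (unitPart A D z) < ε)
    {Ω : Set (Euc n × Euc m)} (hΩ : IsCompact Ω) {ε : ℝ} (hε : 0 < ε) :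
    ∃ W : Finset (Euc m), ∀ z ∈ Ω,
      unitPart A D z ⊆ thickening ε (convexHull ℝ (generator A D z '' W)) := by
  classical
  choose W hW using fun z =>
    eventually_unitPart_subset_thickening A D hA hD hΓ z (ε := ε / 3) (by positivity)
  obtain ⟨t, -, hcover⟩ := hΩ.elim_nhds_subcover _ fun z _ => hW z
  refine ⟨t.biUnion W, fun z hz => ?_⟩
  obtain ⟨ζ, hζ, hzζ⟩ := mem_iUnion₂.1 (hcover hz)
  rw [← add_thirds ε]
  exact hzζ.trans <| thickening_subset_of_subset _ <|
    convexHull_mono (image_mono (Finset.coe_subset.2 (Finset.subset_biUnion_of_mem W hζ)))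

end Gamma

/-- **Lemma 2.** Given `ε' > 0` and a compact set `Ω ⊂ ℝ^{n+m}`, there exist finitely
many vectors `w₁, …, w_ν ∈ ℝᵐ` such that every `p ∈ Γ(q,u)` with `|p| ≤ 1`,
`(q,u) ∈ Ω`, is `ε'`-approximated by `A(q,u)·Σ θᵢ (wᵢᵀ D(q,u) wᵢ)` for suitable
convex coefficients `θ`. -/
theorem finitely_many_generators {n m : ℕ}
    (A : Euc n × Euc m → Euc n →L[ℝ] Euc n)
    (B : Euc n × Euc m → Euc n →L[ℝ] Euc n →L[ℝ] Euc n)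
    (C : Euc n × Euc m → Euc n →L[ℝ] Euc m →L[ℝ] Euc n)
    (D : Euc n × Euc m → Euc m →L[ℝ] Euc m →L[ℝ] Euc n)
    (K : Euc n × Euc m → Euc m →L[ℝ] Euc n)
    (hH : HypH A B C D K)
    (ε' : ℝ) (hε' : 0 < ε')
    (Ω : Set (Euc n × Euc m)) (hΩ : IsCompact Ω) :
    ∃ ν : ℕ, ∃ w : Fin ν → Euc m,
      ∀ z ∈ Ω, ∀ p ∈ Gamma A D z, ‖p‖ ≤ 1 →
        ∃ θ : Fin ν → ℝ, (∀ i, θ i ∈ Icc (0:ℝ) 1) ∧ (∑ i, θ i = 1) ∧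
          ‖p - A z (∑ i, θ i • D z (w i) (w i))‖ ≤ ε' := by
  obtain ⟨W, hW⟩ := Gamma.exists_finset_forall_unitPart_subset_thickening A D
    hH.lipA.continuous hH.lipD.continuous hH.contGamma1 hΩ hε'
  let w : Fin W.card → Euc m := fun i => W.equivFin.symm i
  have hw : range w = W := (W.equivFin.symm.surjective.range_comp _).trans Subtype.range_coe
  refine ⟨W.card, w, fun z hz p hp hp₁ => ?_⟩
  obtain ⟨x, hx, hpx⟩ :=
    mem_thickening_iff.1 (hW z hz ⟨hp, mem_closedBall_zero_iff.2 hp₁⟩)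
  rw [← hw, ← range_comp, convexHull_range_eq_image_stdSimplex] at hx
  obtain ⟨θ, hθ, rfl⟩ := hx
  refine ⟨θ, mem_Icc_of_mem_stdSimplex hθ, hθ.2, ?_⟩
  simpa [map_sum, Gamma.generator, dist_eq_norm] using hpx.le
end
end

section
/- Assume hypothesis (H). Let Ω ⊂ ℝ^{n+m} be compact and let 𝒟 = {(q,u,p) : (q,u) ∈ Ω, p ∈ Γ(q,u), |p| ≤ 1}. Let ε' > 0 and suppose w₁, …, w_ν ∈ ℝᵐ are vectors such that for every (q,u,p) ∈ 𝒟 there exists θ ∈ Δ_ν with | p − A(q,u) · Σ_{i=1}^ν θ_i ( w_iᵀ D(q,u) w_i ) | ≤ ε'. Then there exists a continuous map Θ = (Θ₁,…,Θ_ν) : 𝒟 → Δ_ν such that | p − A(q,u) · Σ_{i=1}^ν Θ_i(q,u,p) ( w_iᵀ D(q,u) w_i ) | ≤ 2ε' for all (q,u,p) ∈ 𝒟. -/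
open MeasureTheory Set

noncomputable section

/-! The error `‖p - A z (∑ θᵢ • D z wᵢ wᵢ)‖` is continuous in `(z, p)` and convex in `θ`. So
coefficients that are `ε'`-good at a point of `𝒟` stay `2ε'`-good on a neighbourhood of it, and
at each point the `2ε'`-good coefficients in the simplex form a convex set. A partition of unity
on the metric, hence paracompact, space `𝒟` glues these local constant choices. -/

section ContinuousSelection

variable {X F ι : Type*} [NormedAddCommGroup F] [NormedSpace ℝ F] [Fintype ι]

theorem convex_setOf_norm_sub_sum_smul_lt (p : F) (v : ι → F) (δ : ℝ) :
    Convex ℝ {θ : ι → ℝ | ‖p - ∑ i, θ i • v i‖ < δ} := by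
  have hball : {θ : ι → ℝ | ‖p - ∑ i, θ i • v i‖ < δ} =
      Fintype.linearCombination ℝ v ⁻¹' Metric.ball p δ := by
    ext θ
    simp [Fintype.linearCombination_apply, dist_eq_norm, norm_sub_rev]
  exact hball ▸ (convex_ball p δ).linear_preimage _

theorem exists_continuous_stdSimplex_norm_sub_sum_smul_lt [TopologicalSpace X]
    [NormalSpace X] [ParacompactSpace X] {p : X → F} {v : ι → X → F} (hp : Continuous p)
    (hv : ∀ i, Continuous (v i)) {δ : ℝ}
    (h : ∀ x, ∃ θ ∈ stdSimplex ℝ ι, ‖p x - ∑ i, θ i • v i x‖ < δ) :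
    ∃ Θ : C(X, ι → ℝ), ∀ x, Θ x ∈ stdSimplex ℝ ι ∧ ‖p x - ∑ i, Θ x i • v i x‖ < δ := by
  refine exists_continuous_forall_mem_convex_of_local_const
    (fun x => (convex_stdSimplex ℝ ι).inter (convex_setOf_norm_sub_sum_smul_lt (p x) _ δ))
    fun x => ?_
  obtain ⟨θ, hθ, hlt⟩ := h x
  have hcont : Continuous fun y => ‖p y - ∑ i, θ i • v i y‖ := by fun_prop
  exact ⟨θ, (hcont.continuousAt.eventually_lt continuousAt_const hlt).mono
    fun y hy => ⟨hθ, hy⟩⟩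

theorem exists_continuousOn_stdSimplex_norm_sub_sum_smul_lt [MetricSpace X] {s : Set X}
    {p : X → F} {v : ι → X → F} (hp : Continuous p) (hv : ∀ i, Continuous (v i)) {δ : ℝ}
    (h : ∀ x ∈ s, ∃ θ ∈ stdSimplex ℝ ι, ‖p x - ∑ i, θ i • v i x‖ < δ) :
    ∃ Θ : X → ι → ℝ, ContinuousOn Θ s ∧
      ∀ x ∈ s, Θ x ∈ stdSimplex ℝ ι ∧ ‖p x - ∑ i, Θ x i • v i x‖ < δ := by
  classical
  obtain ⟨Θ, hΘ⟩ := exists_continuous_stdSimplex_norm_sub_sum_smul_lt (X := s)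
    (hp.comp continuous_subtype_val) (fun i => (hv i).comp continuous_subtype_val)
    fun x => h x x.2
  refine ⟨fun x => if hx : x ∈ s then Θ ⟨x, hx⟩ else 0, ?_, fun x hx => ?_⟩
  · rw [continuousOn_iff_continuous_domRestrict]
    convert Θ.continuous with x
    simp
  · simpa [hx] using hΘ ⟨x, hx⟩

end ContinuousSelection

theorem continuous_selection_of_coefficients_general {n m : ℕ}
    (A : Euc n × Euc m → Euc n →L[ℝ] Euc n)
    (B : Euc n × Euc m → Euc n →L[ℝ] Euc n →L[ℝ] Euc n)
    (C : Euc n × Euc m → Euc n →L[ℝ] Euc m →L[ℝ] Euc n)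
    (D : Euc n × Euc m → Euc m →L[ℝ] Euc m →L[ℝ] Euc n)
    (K : Euc n × Euc m → Euc m →L[ℝ] Euc n)
    (hH : HypH A B C D K)
    (Ω : Set (Euc n × Euc m))
    (ε' : ℝ) (hε' : 0 < ε')
    (ν : ℕ) (w : Fin ν → Euc m)
    (happrox : ∀ z ∈ Ω, ∀ p ∈ Gamma A D z, ‖p‖ ≤ 1 →
      ∃ θ : Fin ν → ℝ, (∀ i, θ i ∈ Icc (0:ℝ) 1) ∧ (∑ i, θ i = 1) ∧
        ‖p - A z (∑ i, θ i • D z (w i) (w i))‖ ≤ ε') :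
    ∃ Θ : (Euc n × Euc m) × Euc n → Fin ν → ℝ,
      ContinuousOn Θ {x : (Euc n × Euc m) × Euc n |
        x.1 ∈ Ω ∧ x.2 ∈ Gamma A D x.1 ∧ ‖x.2‖ ≤ 1} ∧
      ∀ x : (Euc n × Euc m) × Euc n,
        x.1 ∈ Ω → x.2 ∈ Gamma A D x.1 → ‖x.2‖ ≤ 1 →
          (∀ i, Θ x i ∈ Icc (0:ℝ) 1) ∧ (∑ i, Θ x i = 1) ∧
          ‖x.2 - A x.1 (∑ i, Θ x i • D x.1 (w i) (w i))‖ ≤ 2 * ε' := by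
  have hA := hH.lipA.continuous
  have hD := hH.lipD.continuous
  have hsum (x : (Euc n × Euc m) × Euc n) (θ : Fin ν → ℝ) :
      A x.1 (∑ i, θ i • D x.1 (w i) (w i)) = ∑ i, θ i • A x.1 (D x.1 (w i) (w i)) := by
    simp only [map_sum, map_smul]
  let 𝒟 : Set ((Euc n × Euc m) × Euc n) := {x | x.1 ∈ Ω ∧ x.2 ∈ Gamma A D x.1 ∧ ‖x.2‖ ≤ 1}
  obtain ⟨Θ, hΘc, hΘ⟩ := exists_continuousOn_stdSimplex_norm_sub_sum_smul_lt (s := 𝒟)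
    (v := fun i (x : (Euc n × Euc m) × Euc n) => A x.1 (D x.1 (w i) (w i))) (δ := 2 * ε')
    continuous_snd (by fun_prop) fun x ⟨hz, hp, hp1⟩ => by
      obtain ⟨θ, hθ01, hθ1, hθ⟩ := happrox x.1 hz x.2 hp hp1
      exact ⟨θ, ⟨fun i => (hθ01 i).1, hθ1⟩, by rw [← hsum]; linarith⟩
  refine ⟨Θ, hΘc, fun x hz hp hp1 => ?_⟩
  obtain ⟨hsimplex, hlt⟩ := hΘ x ⟨hz, hp, hp1⟩
  exact ⟨mem_Icc_of_mem_stdSimplex hsimplex, hsimplex.2, by rw [hsum]; exact hlt.le⟩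

/-- **Lemma 3.** If finitely many vectors `w₁,…,w_ν` give an `ε'`-approximation of
every `p ∈ Γ₁(q,u)` over the compact set `Ω`, then the convex coefficients can be
chosen continuously on `𝒟 = {(q,u,p) : (q,u) ∈ Ω, p ∈ Γ₁(q,u)}`, at the price of
doubling the error. -/
theorem continuous_selection_of_coefficients {n m : ℕ}
    (A : Euc n × Euc m → Euc n →L[ℝ] Euc n)
    (B : Euc n × Euc m → Euc n →L[ℝ] Euc n →L[ℝ] Euc n)
    (C : Euc n × Euc m → Euc n →L[ℝ] Euc m →L[ℝ] Euc n)
    (D : Euc n × Euc m → Euc m →L[ℝ] Euc m →L[ℝ] Euc n)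
    (K : Euc n × Euc m → Euc m →L[ℝ] Euc n)
    (hH : HypH A B C D K)
    (Ω : Set (Euc n × Euc m)) (hΩ : IsCompact Ω)
    (ε' : ℝ) (hε' : 0 < ε')
    (ν : ℕ) (w : Fin ν → Euc m)
    (happrox : ∀ z ∈ Ω, ∀ p ∈ Gamma A D z, ‖p‖ ≤ 1 →
      ∃ θ : Fin ν → ℝ, (∀ i, θ i ∈ Icc (0:ℝ) 1) ∧ (∑ i, θ i = 1) ∧
        ‖p - A z (∑ i, θ i • D z (w i) (w i))‖ ≤ ε') :
    ∃ Θ : (Euc n × Euc m) × Euc n → Fin ν → ℝ,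
      ContinuousOn Θ {x : (Euc n × Euc m) × Euc n |
        x.1 ∈ Ω ∧ x.2 ∈ Gamma A D x.1 ∧ ‖x.2‖ ≤ 1} ∧
      ∀ x : (Euc n × Euc m) × Euc n,
        x.1 ∈ Ω → x.2 ∈ Gamma A D x.1 → ‖x.2‖ ≤ 1 →
          (∀ i, Θ x i ∈ Icc (0:ℝ) 1) ∧ (∑ i, Θ x i = 1) ∧
          ‖x.2 - A x.1 (∑ i, Θ x i • D x.1 (w i) (w i))‖ ≤ 2 * ε' :=
  continuous_selection_of_coefficients_general A B C D K hH Ω ε' hε' ν w happrox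
end
end

section
/- Let h : [0,1] → ℝ be twice continuously differentiable with h'(s) > 0 for all s ∈ [0,1], let β : [0,1] → ℝ^d be continuously differentiable, and let α > 0. Then for every τ ∈ [0,1], | ∫₀^τ cos(α³ h(s)) β(s) ds | ≤ (2/α³) ( |β(τ)| / h'(τ) + ∫₀^τ | (d/ds)( β(s)/h'(s) ) | ds ). -/
/-!
Write `cos (λ h) • β = u' • v` with `u = λ⁻¹ sin (λ h)` and `v = β / h'`, and integrate by parts:
`∫ u' • v = u(τ) v(τ) - u(0) v(0) - ∫ u • v'`. Since `|u| ≤ λ⁻¹`, and `‖v(0)‖ ≤ ‖v(τ)‖ + ∫ ‖v'‖`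
by the fundamental theorem of calculus, the integral is at most `2λ⁻¹ (‖v(τ)‖ + ∫ ‖v'‖)`.
-/

open MeasureTheory Set

noncomputable section

section

variable {E : Type*} [NormedAddCommGroup E] [NormedSpace ℝ E] [CompleteSpace E]
  {a b : ℝ} {v v' : ℝ → E}

theorem norm_le_norm_add_integral_norm_deriv (hab : a ≤ b)
    (hv : ∀ x ∈ Icc a b, HasDerivWithinAt v (v' x) (Icc a b) x)
    (hv' : IntervalIntegrable v' volume a b) :
    ‖v a‖ ≤ ‖v b‖ + ∫ x in a..b, ‖v' x‖ := by
  have hftc : ∫ x in a..b, v' x = v b - v a :=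
    intervalIntegral.integral_eq_sub_of_hasDeriv_right_of_le hab
      (fun x hx ↦ (hv x hx).continuousWithinAt)
      (fun x hx ↦ ((hv x (Ioo_subset_Icc_self hx)).hasDerivAt
        (Icc_mem_nhds hx.1 hx.2)).hasDerivWithinAt) hv'
  calc ‖v a‖ = ‖v b - ∫ x in a..b, v' x‖ := by rw [hftc, sub_sub_cancel]
    _ ≤ ‖v b‖ + ‖∫ x in a..b, v' x‖ := norm_sub_le _ _
    _ ≤ ‖v b‖ + ∫ x in a..b, ‖v' x‖ := by
      gcongr; exact intervalIntegral.norm_integral_le_integral_norm hab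

theorem norm_integral_deriv_smul_le {u u' : ℝ → ℝ} {M : ℝ} (hab : a ≤ b)
    (hu : ∀ x ∈ Icc a b, HasDerivWithinAt u (u' x) (Icc a b) x)
    (hv : ∀ x ∈ Icc a b, HasDerivWithinAt v (v' x) (Icc a b) x)
    (hu' : IntervalIntegrable u' volume a b) (hv' : IntervalIntegrable v' volume a b)
    (huM : ∀ x ∈ Icc a b, |u x| ≤ M) :
    ‖∫ x in a..b, u' x • v x‖ ≤ 2 * M * (‖v b‖ + ∫ x in a..b, ‖v' x‖) := by
  rw [← uIcc_of_le hab] at hu hv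
  have hparts :=
    intervalIntegral.integral_smul_deriv_eq_deriv_smul_of_hasDerivWithinAt hu hv hu' hv'
  rw [uIcc_of_le hab] at hu hv
  have hM : 0 ≤ M := (abs_nonneg _).trans (huM a (left_mem_Icc.2 hab))
  have hsmul_le : ∀ x ∈ Icc a b, ∀ y : E, ‖u x • y‖ ≤ M * ‖y‖ := fun x hx y ↦ by
    rw [norm_smul, Real.norm_eq_abs]; gcongr; exact huM x hx
  have hrest : ‖∫ x in a..b, u x • v' x‖ ≤ M * ∫ x in a..b, ‖v' x‖ := by
    rw [← intervalIntegral.integral_const_mul]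
    refine intervalIntegral.norm_integral_le_of_norm_le hab
      (Filter.Eventually.of_forall fun x hx ↦ ?_) (hv'.norm.const_mul M)
    exact hsmul_le x (Ioc_subset_Icc_self hx) _
  have hva := norm_le_norm_add_integral_norm_deriv hab hv hv'
  have hint : 0 ≤ ∫ x in a..b, ‖v' x‖ :=
    intervalIntegral.integral_nonneg hab fun _ _ ↦ norm_nonneg _
  have hprod : ∫ x in a..b, u' x • v x = u b • v b - u a • v a - ∫ x in a..b, u x • v' x := by
    rw [hparts]; abel
  calc ‖∫ x in a..b, u' x • v x‖
      ≤ ‖u b • v b‖ + ‖u a • v a‖ + ‖∫ x in a..b, u x • v' x‖ := by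
        rw [hprod]; exact (norm_sub_le _ _).trans (by gcongr; exact norm_sub_le _ _)
    _ ≤ M * ‖v b‖ + M * ‖v a‖ + M * ∫ x in a..b, ‖v' x‖ := by
        gcongr
        · exact hsmul_le b (right_mem_Icc.2 hab) _
        · exact hsmul_le a (left_mem_Icc.2 hab) _
    _ ≤ 2 * M * (‖v b‖ + ∫ x in a..b, ‖v' x‖) := by nlinarith [norm_nonneg (v b)]

end

section

variable {E : Type*} [NormedAddCommGroup E] [NormedSpace ℝ E] {s : Set ℝ} {x : ℝ}

theorem HasDerivWithinAt.inv_smul {f : ℝ → ℝ} {g : ℝ → E} {f' : ℝ} {g' : E}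
    (hf : HasDerivWithinAt f f' s x) (hg : HasDerivWithinAt g g' s x) (hx : f x ≠ 0) :
    HasDerivWithinAt (fun t ↦ (f t)⁻¹ • g t) ((f x)⁻¹ • g' - (f' / f x ^ 2) • g x) s x :=
  ((hf.inv hx).smul hg).congr_deriv (by rw [neg_div, neg_smul, sub_eq_add_neg, Pi.inv_apply])

theorem HasDerivWithinAt.inv_mul_sin_const_mul {h : ℝ → ℝ} {h' lam : ℝ}
    (hh : HasDerivWithinAt h h' s x) (hlam : lam ≠ 0) :
    HasDerivWithinAt (fun t ↦ lam⁻¹ * Real.sin (lam * h t)) (Real.cos (lam * h x) * h') s x :=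
  ((hh.const_mul lam).sin.const_mul lam⁻¹).congr_deriv (by field_simp)

end

theorem norm_integral_cos_mul_smul_le {E : Type*} [NormedAddCommGroup E] [NormedSpace ℝ E]
    [CompleteSpace E] {h h' h'' : ℝ → ℝ} {β β' : ℝ → E} {a b lam : ℝ} (hab : a ≤ b)
    (hlam : 0 < lam)
    (hh : ∀ s ∈ Icc a b, HasDerivWithinAt h (h' s) (Icc a b) s)
    (hh' : ∀ s ∈ Icc a b, HasDerivWithinAt h' (h'' s) (Icc a b) s)
    (hh''c : ContinuousOn h'' (Icc a b))
    (hne : ∀ s ∈ Icc a b, h' s ≠ 0)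
    (hβ : ∀ s ∈ Icc a b, HasDerivWithinAt β (β' s) (Icc a b) s)
    (hβ'c : ContinuousOn β' (Icc a b)) :
    ‖∫ s in a..b, Real.cos (lam * h s) • β s‖ ≤
      2 / lam * (‖β b‖ / |h' b| +
        ∫ s in a..b, ‖(h' s)⁻¹ • β' s - (h'' s / h' s ^ 2) • β s‖) := by
  have hhc : ContinuousOn h (Icc a b) := fun s hs ↦ (hh s hs).continuousWithinAt
  have hh'c : ContinuousOn h' (Icc a b) := fun s hs ↦ (hh' s hs).continuousWithinAt
  have hβc : ContinuousOn β (Icc a b) := fun s hs ↦ (hβ s hs).continuousWithinAt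
  have hu'c : ContinuousOn (fun s ↦ Real.cos (lam * h s) * h' s) (Icc a b) := by fun_prop
  have hv'c : ContinuousOn (fun s ↦ (h' s)⁻¹ • β' s - (h'' s / h' s ^ 2) • β s) (Icc a b) :=
    ((hh'c.inv₀ hne).smul hβ'c).sub
      ((hh''c.div (hh'c.pow 2) fun s hs ↦ pow_ne_zero 2 (hne s hs)).smul hβc)
  have hbound := norm_integral_deriv_smul_le hab
    (fun s hs ↦ (hh s hs).inv_mul_sin_const_mul hlam.ne')
    (fun s hs ↦ (hh' s hs).inv_smul (hβ s hs) (hne s hs))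
    (hu'c.intervalIntegrable_of_Icc hab) (hv'c.intervalIntegrable_of_Icc hab)
    (M := lam⁻¹) fun s _ ↦ by
      rw [abs_mul, abs_inv, abs_of_pos hlam]
      exact mul_le_of_le_one_right (by positivity) (Real.abs_sin_le_one _)
  have hcancel : ∫ s in a..b, (Real.cos (lam * h s) * h' s) • ((h' s)⁻¹ • β s) =
      ∫ s in a..b, Real.cos (lam * h s) • β s := by
    refine intervalIntegral.integral_congr fun s hs ↦ ?_
    rw [uIcc_of_le hab] at hs
    simp only [smul_smul, mul_assoc, mul_inv_cancel₀ (hne s hs), mul_one]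
  rw [hcancel, norm_smul, norm_inv, Real.norm_eq_abs, ← div_eq_inv_mul] at hbound
  rwa [div_eq_mul_inv 2 lam]

/-- Estimate on rapidly oscillating integrals, obtained by integration by parts:
`|∫₀^τ cos(α³h(s)) β(s) ds| ≤ (2/α³)(|β(τ)|/h'(τ) + ∫₀^τ |(β/h')'(s)| ds)`. -/
theorem oscillating_integral_estimate {d : ℕ}
    (h h' h'' : ℝ → ℝ) (β β' : ℝ → Euc d) (α : ℝ) (hα : 0 < α)
    (hh : ∀ s ∈ Icc (0:ℝ) 1, HasDerivWithinAt h (h' s) (Icc 0 1) s)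
    (hh' : ∀ s ∈ Icc (0:ℝ) 1, HasDerivWithinAt h' (h'' s) (Icc 0 1) s)
    (hh''c : ContinuousOn h'' (Icc 0 1))
    (hpos : ∀ s ∈ Icc (0:ℝ) 1, 0 < h' s)
    (hβ : ∀ s ∈ Icc (0:ℝ) 1, HasDerivWithinAt β (β' s) (Icc 0 1) s)
    (hβ'c : ContinuousOn β' (Icc 0 1))
    (τ : ℝ) (hτ : τ ∈ Icc (0:ℝ) 1) :
    ‖∫ s in (0:ℝ)..τ, Real.cos (α ^ 3 * h s) • β s‖ ≤
      (2 / α ^ 3) * (‖β τ‖ / h' τ +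
        ∫ s in (0:ℝ)..τ, ‖(h' s)⁻¹ • β' s - (h'' s / (h' s) ^ 2) • β s‖) := by
  have hsub : Icc 0 τ ⊆ Icc (0:ℝ) 1 := Icc_subset_Icc_right hτ.2
  have hbound := norm_integral_cos_mul_smul_le hτ.1 (pow_pos hα 3)
    (fun s hs ↦ (hh s (hsub hs)).mono hsub) (fun s hs ↦ (hh' s (hsub hs)).mono hsub)
    (hh''c.mono hsub) (fun s hs ↦ (hpos s (hsub hs)).ne')
    (fun s hs ↦ (hβ s (hsub hs)).mono hsub) (hβ'c.mono hsub)
  rwa [abs_of_pos (hpos τ hτ)] at hbound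
end
end

section
/- Let β : [0,1] → ℝ^d be continuously differentiable and let α > 0. Then for every τ ∈ [0,1], the integral I₁ = ∫₀^τ α² e^{−α²(τ−s)} β(s) ds satisfies | I₁ − β(τ) | ≤ e^{−α²τ} |β(τ)| + α^{−2} · sup_{s∈[0,1]} |β'(s)|. -/
/-!
Since `∫₀^τ α² e^{−α²(τ−s)} ds = 1 − e^{−α²τ}`, the difference `I₁ − β(τ)` splits as
`∫₀^τ α² e^{−α²(τ−s)} (β(s) − β(τ)) ds − e^{−α²τ} β(τ)`. By the mean value inequality
`|β(s) − β(τ)| ≤ M (τ − s)` with `M = sup |β'|`, and the first moment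
`∫₀^τ α² e^{−α²(τ−s)} (τ − s) ds` of the kernel is at most `α⁻²`.
-/

open MeasureTheory Set

noncomputable section

def expKernel (a τ s : ℝ) : ℝ := a * Real.exp (-a * (τ - s))

lemma continuous_expKernel (a τ : ℝ) : Continuous (expKernel a τ) := by
  unfold expKernel
  fun_prop

lemma expKernel_nonneg {a : ℝ} (ha : 0 ≤ a) (τ s : ℝ) : 0 ≤ expKernel a τ s := by
  unfold expKernel
  positivity

lemma hasDerivAt_exp_neg_mul_sub (a τ s : ℝ) :
    HasDerivAt (fun u => Real.exp (-a * (τ - u))) (expKernel a τ s) s := by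
  have h := (((hasDerivAt_id' s).const_sub τ).const_mul (-a)).exp
  convert h using 1
  simp only [expKernel]
  ring

lemma integral_expKernel (a τ : ℝ) :
    ∫ s in (0 : ℝ)..τ, expKernel a τ s = 1 - Real.exp (-a * τ) := by
  rw [intervalIntegral.integral_eq_sub_of_hasDerivAt (fun s _ => hasDerivAt_exp_neg_mul_sub a τ s)
    ((continuous_expKernel a τ).intervalIntegrable 0 τ)]
  simp

lemma integral_expKernel_mul_sub {a : ℝ} (ha : a ≠ 0) (τ : ℝ) :
    ∫ s in (0 : ℝ)..τ, expKernel a τ s * (τ - s) = a⁻¹ - (τ + a⁻¹) * Real.exp (-a * τ) := by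
  have hderiv (s : ℝ) : HasDerivAt (fun u => (τ - u + a⁻¹) * Real.exp (-a * (τ - u)))
      (expKernel a τ s * (τ - s)) s := by
    have h := (((hasDerivAt_id' s).const_sub τ).add_const a⁻¹).mul
      (hasDerivAt_exp_neg_mul_sub a τ s)
    refine h.congr_deriv ?_
    simp only [expKernel]
    field_simp
    ring
  rw [intervalIntegral.integral_eq_sub_of_hasDerivAt (fun s _ => hderiv s)
    (((continuous_expKernel a τ).mul (continuous_sub_left τ)).intervalIntegrable 0 τ)]
  simp

lemma integral_expKernel_mul_sub_le {a : ℝ} (ha : 0 ≤ a) {τ : ℝ} (hτ : 0 ≤ τ) :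
    ∫ s in (0 : ℝ)..τ, expKernel a τ s * (τ - s) ≤ a⁻¹ := by
  rcases ha.eq_or_lt with rfl | ha
  · simp [expKernel]
  rw [integral_expKernel_mul_sub ha.ne']
  have : 0 ≤ (τ + a⁻¹) * Real.exp (-a * τ) := by positivity
  linarith

section

variable {E : Type*} [NormedAddCommGroup E] [NormedSpace ℝ E]

lemma norm_integral_smul_sub_le_of_norm_sub_le {k : ℝ → ℝ} {f : ℝ → E} {t₀ τ M : ℝ}
    (hτ : t₀ ≤ τ) (hk : IntervalIntegrable k volume t₀ τ) (hk₀ : ∀ s ∈ Ioc t₀ τ, 0 ≤ k s)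
    (hf : ∀ s ∈ Ioc t₀ τ, ‖f s - f τ‖ ≤ M * (τ - s)) :
    ‖∫ s in t₀..τ, k s • (f s - f τ)‖ ≤ M * ∫ s in t₀..τ, k s * (τ - s) := by
  rw [← intervalIntegral.integral_const_mul]
  refine intervalIntegral.norm_integral_le_of_norm_le hτ
    (Filter.Eventually.of_forall fun s hs => ?_)
    ((hk.mul_continuousOn (continuous_sub_left τ).continuousOn).const_mul M)
  calc ‖k s • (f s - f τ)‖ = k s * ‖f s - f τ‖ := by
        rw [norm_smul, Real.norm_of_nonneg (hk₀ s hs)]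
    _ ≤ k s * (M * (τ - s)) := mul_le_mul_of_nonneg_left (hf s hs) (hk₀ s hs)
    _ = M * (k s * (τ - s)) := by ring

variable [CompleteSpace E]

lemma integral_expKernel_smul_sub_self (a τ : ℝ) {f : ℝ → E}
    (hf : IntervalIntegrable f volume 0 τ) :
    (∫ s in (0 : ℝ)..τ, expKernel a τ s • f s) - f τ =
      (∫ s in (0 : ℝ)..τ, expKernel a τ s • (f s - f τ)) - Real.exp (-a * τ) • f τ := by
  simp_rw [smul_sub]
  have hk := continuous_expKernel a τ
  rw [intervalIntegral.integral_sub (g := fun s => expKernel a τ s • f τ)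
    (hf.continuousOn_smul hk.continuousOn) ((hk.smul continuous_const).intervalIntegrable _ _),
    intervalIntegral.integral_smul_const, integral_expKernel, sub_smul, one_smul]
  abel

lemma norm_integral_expKernel_smul_sub_le {a τ M : ℝ} {f : ℝ → E} (ha : 0 ≤ a) (hτ : 0 ≤ τ)
    (hM : 0 ≤ M) (hf : IntervalIntegrable f volume 0 τ)
    (hfM : ∀ s ∈ Ioc 0 τ, ‖f s - f τ‖ ≤ M * (τ - s)) :
    ‖(∫ s in (0 : ℝ)..τ, expKernel a τ s • f s) - f τ‖ ≤
      Real.exp (-a * τ) * ‖f τ‖ + a⁻¹ * M := by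
  rw [integral_expKernel_smul_sub_self a τ hf]
  have hmain : ‖∫ s in (0 : ℝ)..τ, expKernel a τ s • (f s - f τ)‖ ≤ M * a⁻¹ :=
    (norm_integral_smul_sub_le_of_norm_sub_le hτ ((continuous_expKernel a τ).intervalIntegrable _ _)
      (fun s _ => expKernel_nonneg ha τ s) hfM).trans
      (mul_le_mul_of_nonneg_left (integral_expKernel_mul_sub_le ha hτ) hM)
  calc _ ≤ ‖∫ s in (0 : ℝ)..τ, expKernel a τ s • (f s - f τ)‖ + ‖Real.exp (-a * τ) • f τ‖ :=
        norm_sub_le _ _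
    _ ≤ M * a⁻¹ + Real.exp (-a * τ) * ‖f τ‖ := by
        rw [norm_smul, Real.norm_of_nonneg (Real.exp_pos _).le]
        gcongr
    _ = Real.exp (-a * τ) * ‖f τ‖ + a⁻¹ * M := by ring

end

lemma norm_le_iSup_norm_of_continuousOn {X E : Type*} [TopologicalSpace X]
    [NormedAddCommGroup E] {K : Set X} (hK : IsCompact K) {g : X → E} (hg : ContinuousOn g K)
    {x : X} (hx : x ∈ K) : ‖g x‖ ≤ ⨆ y : K, ‖g y‖ := by
  have hbdd := hK.bddAbove_image hg.norm
  rw [Set.image_eq_range] at hbdd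
  exact le_ciSup hbdd ⟨x, hx⟩

theorem exponential_averaging_estimate_general {d : ℕ}
    (β β' : ℝ → Euc d) (α : ℝ)
    (hβ : ∀ s ∈ Icc (0:ℝ) 1, HasDerivWithinAt β (β' s) (Icc 0 1) s)
    (hβ'c : ContinuousOn β' (Icc 0 1))
    (τ : ℝ) (hτ : τ ∈ Icc (0:ℝ) 1) :
    ‖(∫ s in (0:ℝ)..τ, (α ^ 2 * Real.exp (-α ^ 2 * (τ - s))) • β s) - β τ‖ ≤
      Real.exp (-α ^ 2 * τ) * ‖β τ‖ +
        (α ^ 2)⁻¹ * ⨆ s : Icc (0:ℝ) 1, ‖β' ↑s‖ := by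
  obtain ⟨hτ₀, hτ₁⟩ := hτ
  set M := ⨆ s : Icc (0:ℝ) 1, ‖β' ↑s‖
  have hβ'M (s : ℝ) (hs : s ∈ Icc (0 : ℝ) 1) : ‖β' s‖ ≤ M :=
    norm_le_iSup_norm_of_continuousOn isCompact_Icc hβ'c hs
  have hsub : Icc 0 τ ⊆ Icc (0 : ℝ) 1 := Icc_subset_Icc_right hτ₁
  have hβc : ContinuousOn β (Icc 0 1) := fun s hs => (hβ s hs).continuousWithinAt
  have hβlip : ∀ s ∈ Ioc 0 τ, ‖β s - β τ‖ ≤ M * (τ - s) := by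
    intro s hs
    have h := (convex_Icc (0 : ℝ) 1).norm_image_sub_le_of_norm_hasDerivWithin_le hβ hβ'M
      (hsub (right_mem_Icc.2 hτ₀)) (hsub (Ioc_subset_Icc_self hs))
    rwa [Real.norm_eq_abs, abs_of_nonpos (sub_nonpos.2 hs.2), neg_sub] at h
  exact norm_integral_expKernel_smul_sub_le (sq_nonneg α) hτ₀
    ((norm_nonneg _).trans (hβ'M 0 (left_mem_Icc.2 zero_le_one)))
    ((hβc.mono hsub).intervalIntegrable_of_Icc hτ₀) hβlip

/-- Estimate (I1est): `I₁ = ∫₀^τ α² e^{−α²(τ−s)} β(s) ds` satisfies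
`|I₁ − β(τ)| ≤ e^{−α²τ}|β(τ)| + α⁻² sup |β'|`. -/
theorem exponential_averaging_estimate {d : ℕ}
    (β β' : ℝ → Euc d) (α : ℝ) (hα : 0 < α)
    (hβ : ∀ s ∈ Icc (0:ℝ) 1, HasDerivWithinAt β (β' s) (Icc 0 1) s)
    (hβ'c : ContinuousOn β' (Icc 0 1))
    (τ : ℝ) (hτ : τ ∈ Icc (0:ℝ) 1) :
    ‖(∫ s in (0:ℝ)..τ, (α ^ 2 * Real.exp (-α ^ 2 * (τ - s))) • β s) - β τ‖ ≤
      Real.exp (-α ^ 2 * τ) * ‖β τ‖ +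
        (α ^ 2)⁻¹ * ⨆ s : Icc (0:ℝ) 1, ‖β' ↑s‖ :=
  exponential_averaging_estimate_general β β' α hβ hβ'c τ hτ
end
end

section
/- Let h : [0,1] → ℝ be twice continuously differentiable with h'(s) ≥ c > 0 for all s ∈ [0,1], let β : [0,1] → ℝ^d be continuously differentiable, and let α ≥ 1. Then for every τ ∈ [0,1], the integral I₂ = ∫₀^τ α² e^{−α²(τ−s)} ( 2cos²(α³ h(s)) − 1 ) β(s) ds satisfies | I₂ | ≤ (1/α) ( α² ‖β‖_∞ + ‖β'‖_∞ ) · c^{−1} + (1/α) ‖β‖_∞ · sup_{s∈[0,1]} | h''(s)/(h'(s))² |, where ‖β‖_∞ = sup_{s∈[0,1]} |β(s)| and ‖β'‖_∞ = sup_{s∈[0,1]} |β'(s)|. -/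
/-!
Since `2cos²x - 1 = cos 2x` and `(sin (2α³h))' = 2α³h' cos (2α³h)`, the integrand is
`(sin (2α³h))' · A β` with amplitude `A(s) = e^{-α²(τ-s)} / (2α h'(s))`. One integration by
parts, with `|sin| ≤ 1`, bounds the integral by `|A β|` at the endpoints plus `∫ |(A β)'|`.
Every term carries the factor `1/(2α)`; differentiating `e^{-α²(τ-s)}` costs a factor `α²`,
which is paid back because the weight `e^{-α²(τ-s)}` integrates to `(1 - e^{-α²τ})/α²` over
`[0, τ]`, and this `1 - e^{-α²τ}` combines with the boundary value `e^{-α²τ}` at `s = 0`.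
-/

open MeasureTheory Set

noncomputable section

open Real intervalIntegral

theorem IsCompact.le_ciSup_of_continuousOn {X : Type*} [TopologicalSpace X] {K : Set X}
    (hK : IsCompact K) {f : X → ℝ} (hf : ContinuousOn f K) {x : X} (hx : x ∈ K) :
    f x ≤ ⨆ y : K, f y :=
  le_ciSup (image_eq_range f K ▸ (hK.image_of_continuousOn hf).bddAbove) ⟨x, hx⟩

theorem integral_exp_neg_mul_sub {k : ℝ} (hk : k ≠ 0) (a b : ℝ) :
    ∫ s in a..b, exp (-k * (b - s)) = (1 - exp (-k * (b - a))) / k := by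
  have hderiv : ∀ s ∈ uIcc a b,
      HasDerivAt (fun s => exp (-k * (b - s)) / k) (exp (-k * (b - s))) s := fun s _ =>
    ((((hasDerivAt_id' s).const_sub b).const_mul (-k)).exp.div_const k).congr_deriv
      (by field_simp)
  rw [integral_eq_sub_of_hasDerivAt hderiv
    ((by fun_prop : Continuous fun s => exp (-k * (b - s))).intervalIntegrable a b)]
  simp only [sub_self, mul_zero, exp_zero]
  ring

theorem norm_integral_deriv_smul_le_s10 {F : Type*} [NormedAddCommGroup F] [NormedSpace ℝ F]
    [CompleteSpace F] {a b : ℝ} (hab : a ≤ b) {g g' : ℝ → ℝ} {u u' : ℝ → F}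
    (hg : ∀ x ∈ Icc a b, HasDerivWithinAt g (g' x) (Icc a b) x)
    (hu : ∀ x ∈ Icc a b, HasDerivWithinAt u (u' x) (Icc a b) x)
    (hg' : IntervalIntegrable g' volume a b) (hu' : IntervalIntegrable u' volume a b)
    (hg_le : ∀ x ∈ Icc a b, |g x| ≤ 1) {w : ℝ → ℝ} (hw : IntervalIntegrable w volume a b)
    (hu'w : ∀ x ∈ Icc a b, ‖u' x‖ ≤ w x) :
    ‖∫ x in a..b, g' x • u x‖ ≤ ‖u a‖ + ‖u b‖ + ∫ x in a..b, w x := by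
  have hgc : ContinuousOn g (uIcc a b) :=
    uIcc_of_le hab ▸ fun x hx => (hg x hx).continuousWithinAt
  have huc : ContinuousOn u (uIcc a b) :=
    uIcc_of_le hab ▸ fun x hx => (hu x hx).continuousWithinAt
  have hint₁ : IntervalIntegrable (fun x => g' x • u x) volume a b := hg'.smul_continuousOn huc
  have hint₂ : IntervalIntegrable (fun x => g x • u' x) volume a b := hu'.continuousOn_smul hgc
  have hibp : ∫ x in a..b, g' x • u x + g x • u' x = g b • u b - g a • u a := by
    refine integral_eq_sub_of_hasDerivAt_of_le hab (uIcc_of_le hab ▸ hgc.smul huc)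
      (fun x hx => ?_) (hint₁.add hint₂)
    have hx' := Icc_mem_nhds hx.1 hx.2
    rw [add_comm]
    exact ((hg x (Ioo_subset_Icc_self hx)).hasDerivAt hx').smul
      ((hu x (Ioo_subset_Icc_self hx)).hasDerivAt hx')
  have hg_smul : ∀ x ∈ Icc a b, ∀ v : F, ‖g x • v‖ ≤ ‖v‖ := fun x hx v => by
    rw [norm_smul, Real.norm_eq_abs]
    exact mul_le_of_le_one_left (norm_nonneg v) (hg_le x hx)
  have hrest : ‖∫ x in a..b, g x • u' x‖ ≤ ∫ x in a..b, w x :=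
    norm_integral_le_of_norm_le hab (Filter.Eventually.of_forall fun x hx =>
      (hg_smul x (Ioc_subset_Icc_self hx) _).trans (hu'w x (Ioc_subset_Icc_self hx))) hw
  rw [integral_add hint₁ hint₂] at hibp
  rw [eq_sub_of_add_eq hibp]
  have hua := hg_smul a (left_mem_Icc.2 hab) (u a)
  have hub := hg_smul b (right_mem_Icc.2 hab) (u b)
  have := norm_sub_le (g b • u b) (g a • u a)
  have := norm_sub_le (g b • u b - g a • u a) (∫ x in a..b, g x • u' x)
  linarith

def dampedAmplitude (α τ : ℝ) (p : ℝ → ℝ) (s : ℝ) : ℝ :=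
  exp (-α ^ 2 * (τ - s)) / (2 * α) * (p s)⁻¹

def dampedAmplitudeDeriv (α τ : ℝ) (p p' : ℝ → ℝ) (s : ℝ) : ℝ :=
  exp (-α ^ 2 * (τ - s)) / (2 * α) * (α ^ 2 * (p s)⁻¹ - p' s / p s ^ 2)

section DampedAmplitude

variable {α τ c s : ℝ} {p p' : ℝ → ℝ} {F : Type*} [NormedAddCommGroup F] [NormedSpace ℝ F]

theorem hasDerivWithinAt_dampedAmplitude {S : Set ℝ} (hp : HasDerivWithinAt p (p' s) S s)
    (hps : p s ≠ 0) :
    HasDerivWithinAt (dampedAmplitude α τ p) (dampedAmplitudeDeriv α τ p p' s) S s := by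
  have hexp : HasDerivAt (fun t => exp (-α ^ 2 * (τ - t)) / (2 * α))
      (exp (-α ^ 2 * (τ - s)) / (2 * α) * α ^ 2) s :=
    ((((hasDerivAt_id' s).const_sub τ).const_mul (-α ^ 2)).exp.div_const (2 * α)).congr_deriv
      (by ring)
  refine (hexp.hasDerivWithinAt.mul (hp.inv hps)).congr_deriv ?_
  simp only [dampedAmplitudeDeriv, Pi.inv_apply]
  ring

theorem continuousOn_dampedAmplitude {S : Set ℝ} (hp : ContinuousOn p S)
    (hp0 : ∀ s ∈ S, p s ≠ 0) : ContinuousOn (dampedAmplitude α τ p) S := by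
  unfold dampedAmplitude
  fun_prop (disch := assumption)

theorem continuousOn_dampedAmplitudeDeriv {S : Set ℝ} (hp : ContinuousOn p S)
    (hp' : ContinuousOn p' S) (hp0 : ∀ s ∈ S, p s ≠ 0) :
    ContinuousOn (dampedAmplitudeDeriv α τ p p') S := by
  have hp0' : ∀ s ∈ S, p s ^ 2 ≠ 0 := fun s hs => pow_ne_zero 2 (hp0 s hs)
  unfold dampedAmplitudeDeriv
  fun_prop (disch := assumption)

theorem cos_mul_smul_dampedAmplitude_smul (hα : α ≠ 0) (hps : p s ≠ 0) (φ : ℝ) (x : F) :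
    (cos (2 * α ^ 3 * φ) * (2 * α ^ 3 * p s)) • dampedAmplitude α τ p s • x =
      (α ^ 2 * exp (-α ^ 2 * (τ - s)) * (2 * cos (α ^ 3 * φ) ^ 2 - 1)) • x := by
  rw [smul_smul, dampedAmplitude, mul_assoc 2 (α ^ 3), cos_two_mul]
  congr 1
  field_simp

theorem norm_dampedAmplitude_smul_le (hα : 0 < α) (hc : 0 < c) (hps : c ≤ p s) {x : F}
    {M : ℝ} (hx : ‖x‖ ≤ M) :
    ‖dampedAmplitude α τ p s • x‖ ≤ exp (-α ^ 2 * (τ - s)) / (2 * α) * (c⁻¹ * M) := by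
  have hp : 0 < p s := hc.trans_le hps
  rw [norm_smul, dampedAmplitude, Real.norm_of_nonneg (by positivity), mul_assoc]
  gcongr

theorem abs_dampedAmplitudeDeriv_le (hα : 0 < α) (hc : 0 < c) (hps : c ≤ p s) {M : ℝ}
    (hp' : |p' s / p s ^ 2| ≤ M) :
    |dampedAmplitudeDeriv α τ p p' s| ≤
      exp (-α ^ 2 * (τ - s)) / (2 * α) * (α ^ 2 * c⁻¹ + M) := by
  have hp : 0 < p s := hc.trans_le hps
  rw [dampedAmplitudeDeriv, abs_mul, abs_of_nonneg (by positivity)]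
  gcongr
  calc |α ^ 2 * (p s)⁻¹ - p' s / p s ^ 2| ≤ |α ^ 2 * (p s)⁻¹| + |p' s / p s ^ 2| := abs_sub _ _
    _ ≤ α ^ 2 * c⁻¹ + M := by
      rw [abs_of_pos (by positivity)]
      gcongr

theorem norm_deriv_dampedAmplitude_smul_le (hα : 0 < α) (hc : 0 < c) (hps : c ≤ p s)
    {x x' : F} {M₁ M₂ M₃ : ℝ} (hx : ‖x‖ ≤ M₁) (hx' : ‖x'‖ ≤ M₂)
    (hp' : |p' s / p s ^ 2| ≤ M₃) :
    ‖dampedAmplitude α τ p s • x' + dampedAmplitudeDeriv α τ p p' s • x‖ ≤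
      exp (-α ^ 2 * (τ - s)) / (2 * α) * (c⁻¹ * M₂ + (α ^ 2 * c⁻¹ + M₃) * M₁) := by
  have h₁ := norm_dampedAmplitude_smul_le (τ := τ) hα hc hps hx'
  have h₂ : ‖dampedAmplitudeDeriv α τ p p' s • x‖ ≤
      exp (-α ^ 2 * (τ - s)) / (2 * α) * (α ^ 2 * c⁻¹ + M₃) * M₁ := by
    have hA' := abs_dampedAmplitudeDeriv_le (τ := τ) hα hc hps hp'
    rw [norm_smul, Real.norm_eq_abs]
    exact mul_le_mul hA' hx (norm_nonneg x) ((abs_nonneg _).trans hA')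
  calc _ ≤ _ := norm_add_le _ _
    _ ≤ _ := add_le_add h₁ h₂
    _ = _ := by ring

end DampedAmplitude

theorem oscillating_bound_arith {α C e M₁ M₂ M₃ : ℝ} (hα : 1 ≤ α) (hC : 0 ≤ C) (he : 0 ≤ e)
    (hM₁ : 0 ≤ M₁) (hM₂ : 0 ≤ M₂) (hM₃ : 0 ≤ M₃) :
    (e + 1) / (2 * α) * (C * M₁) + (1 - e) / α ^ 2 / (2 * α) * (C * M₂ + (α ^ 2 * C + M₃) * M₁)
      ≤ 1 / α * (α ^ 2 * M₁ + M₂) * C + 1 / α * M₁ * M₃ := by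
  have hα0 : 0 < α := one_pos.trans_le hα
  have hα2 : 1 ≤ α ^ 2 := one_le_pow₀ hα
  calc _ = 1 / α * (C * M₁ + (1 - e) / (2 * α ^ 2) * (C * M₂ + M₃ * M₁)) := by
        field_simp; ring
    _ ≤ 1 / α * (α ^ 2 * (C * M₁) + (C * M₂ + M₃ * M₁)) := by
        gcongr 1 / α * (?_ + ?_)
        · exact le_mul_of_one_le_left (by positivity) hα2
        · refine mul_le_of_le_one_left (by positivity) ((div_le_one (by positivity)).2 ?_)
          linarith
    _ = _ := by ring

section Oscillating

variable {F : Type*} [NormedAddCommGroup F] [NormedSpace ℝ F] [CompleteSpace F]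
  {h h' h'' : ℝ → ℝ} {β β' : ℝ → F} {a b α c τ M₁ M₂ M₃ : ℝ}

theorem norm_integral_oscillating_le_dampedAmplitude (hab : a ≤ b) (hα : 0 < α) (hc : 0 < c)
    (hh : ∀ s ∈ Icc a b, HasDerivWithinAt h (h' s) (Icc a b) s)
    (hh' : ∀ s ∈ Icc a b, HasDerivWithinAt h' (h'' s) (Icc a b) s)
    (hh''c : ContinuousOn h'' (Icc a b)) (hge : ∀ s ∈ Icc a b, c ≤ h' s)
    (hβ : ∀ s ∈ Icc a b, HasDerivWithinAt β (β' s) (Icc a b) s)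
    (hβ'c : ContinuousOn β' (Icc a b))
    (hM₁ : ∀ s ∈ Icc a b, ‖β s‖ ≤ M₁) (hM₂ : ∀ s ∈ Icc a b, ‖β' s‖ ≤ M₂)
    (hM₃ : ∀ s ∈ Icc a b, |h'' s / h' s ^ 2| ≤ M₃) :
    ‖∫ s in a..b, (α ^ 2 * exp (-α ^ 2 * (τ - s)) * (2 * cos (α ^ 3 * h s) ^ 2 - 1)) • β s‖ ≤
      ‖dampedAmplitude α τ h' a • β a‖ + ‖dampedAmplitude α τ h' b • β b‖ +
        ∫ s in a..b, exp (-α ^ 2 * (τ - s)) / (2 * α) *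
          (c⁻¹ * M₂ + (α ^ 2 * c⁻¹ + M₃) * M₁) := by
  have hne : ∀ s ∈ Icc a b, h' s ≠ 0 := fun s hs => (hc.trans_le (hge s hs)).ne'
  have hhc : ContinuousOn h (Icc a b) := fun s hs => (hh s hs).continuousWithinAt
  have hh'c : ContinuousOn h' (Icc a b) := fun s hs => (hh' s hs).continuousWithinAt
  have hβc : ContinuousOn β (Icc a b) := fun s hs => (hβ s hs).continuousWithinAt
  rw [integral_congr fun s hs => (cos_mul_smul_dampedAmplitude_smul hα.ne'
    (hne s (uIcc_of_le hab ▸ hs)) (h s) (β s)).symm]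
  refine norm_integral_deriv_smul_le_s10 hab (fun s hs => ((hh s hs).const_mul _).sin)
    (fun s hs => (hasDerivWithinAt_dampedAmplitude (hh' s hs) (hne s hs)).smul (hβ s hs))
    (ContinuousOn.intervalIntegrable_of_Icc hab (by fun_prop))
    ((((continuousOn_dampedAmplitude hh'c hne).smul hβ'c).add
      ((continuousOn_dampedAmplitudeDeriv hh'c hh''c hne).smul hβc)).intervalIntegrable_of_Icc hab)
    (fun s _ => abs_sin_le_one _) ((by fun_prop : Continuous _).intervalIntegrable a b)
    fun s hs => norm_deriv_dampedAmplitude_smul_le hα hc (hge s hs) (hM₁ s hs) (hM₂ s hs)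
      (hM₃ s hs)

theorem norm_integral_oscillating_le (hab : a ≤ b) (hα : 1 ≤ α) (hc : 0 < c)
    (hh : ∀ s ∈ Icc a b, HasDerivWithinAt h (h' s) (Icc a b) s)
    (hh' : ∀ s ∈ Icc a b, HasDerivWithinAt h' (h'' s) (Icc a b) s)
    (hh''c : ContinuousOn h'' (Icc a b)) (hge : ∀ s ∈ Icc a b, c ≤ h' s)
    (hβ : ∀ s ∈ Icc a b, HasDerivWithinAt β (β' s) (Icc a b) s)
    (hβ'c : ContinuousOn β' (Icc a b))
    (hM₁ : ∀ s ∈ Icc a b, ‖β s‖ ≤ M₁) (hM₂ : ∀ s ∈ Icc a b, ‖β' s‖ ≤ M₂)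
    (hM₃ : ∀ s ∈ Icc a b, |h'' s / h' s ^ 2| ≤ M₃) :
    ‖∫ s in a..b, (α ^ 2 * exp (-α ^ 2 * (b - s)) * (2 * cos (α ^ 3 * h s) ^ 2 - 1)) • β s‖ ≤
      1 / α * (α ^ 2 * M₁ + M₂) * c⁻¹ + 1 / α * M₁ * M₃ := by
  have hα0 : 0 < α := one_pos.trans_le hα
  set K := c⁻¹ * M₂ + (α ^ 2 * c⁻¹ + M₃) * M₁
  have ha := left_mem_Icc.2 hab
  have hb := right_mem_Icc.2 hab
  have hends : ‖dampedAmplitude α b h' a • β a‖ + ‖dampedAmplitude α b h' b • β b‖ ≤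
      (exp (-α ^ 2 * (b - a)) + 1) / (2 * α) * (c⁻¹ * M₁) := by
    have h₁ := norm_dampedAmplitude_smul_le (τ := b) hα0 hc (hge b hb) (hM₁ b hb)
    rw [sub_self, mul_zero, exp_zero] at h₁
    calc _ ≤ _ := add_le_add (norm_dampedAmplitude_smul_le hα0 hc (hge a ha) (hM₁ a ha)) h₁
      _ = _ := by ring
  have hweight : ∫ s in a..b, exp (-α ^ 2 * (b - s)) / (2 * α) * K =
      (1 - exp (-α ^ 2 * (b - a))) / α ^ 2 / (2 * α) * K := by
    rw [intervalIntegral.integral_mul_const, intervalIntegral.integral_div,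
      integral_exp_neg_mul_sub (pow_ne_zero 2 hα0.ne')]
  calc _ ≤ _ := norm_integral_oscillating_le_dampedAmplitude hab hα0 hc hh hh' hh''c hge hβ hβ'c
        hM₁ hM₂ hM₃
    _ ≤ (exp (-α ^ 2 * (b - a)) + 1) / (2 * α) * (c⁻¹ * M₁) +
        (1 - exp (-α ^ 2 * (b - a))) / α ^ 2 / (2 * α) * K := by
      rw [hweight]
      exact add_le_add_left hends _
    _ ≤ _ := oscillating_bound_arith hα (inv_nonneg.2 hc.le) (exp_pos _).le
      ((norm_nonneg _).trans (hM₁ a ha)) ((norm_nonneg _).trans (hM₂ a ha))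
      ((abs_nonneg _).trans (hM₃ a ha))

end Oscillating

/-- Estimate (I2est): the rapidly oscillating exponentially weighted integral
`I₂ = ∫₀^τ α² e^{−α²(τ−s)} (2cos²(α³h(s)) − 1) β(s) ds` satisfies
`|I₂| ≤ (1/α)(α²‖β‖ + ‖β'‖) c⁻¹ + (1/α)‖β‖ sup|h''/(h')²|`. -/
theorem oscillating_exponential_estimate {d : ℕ}
    (h h' h'' : ℝ → ℝ) (β β' : ℝ → Euc d) (α c : ℝ)
    (hα : 1 ≤ α) (hc : 0 < c)
    (hh : ∀ s ∈ Icc (0:ℝ) 1, HasDerivWithinAt h (h' s) (Icc 0 1) s)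
    (hh' : ∀ s ∈ Icc (0:ℝ) 1, HasDerivWithinAt h' (h'' s) (Icc 0 1) s)
    (hh''c : ContinuousOn h'' (Icc 0 1))
    (hge : ∀ s ∈ Icc (0:ℝ) 1, c ≤ h' s)
    (hβ : ∀ s ∈ Icc (0:ℝ) 1, HasDerivWithinAt β (β' s) (Icc 0 1) s)
    (hβ'c : ContinuousOn β' (Icc 0 1))
    (τ : ℝ) (hτ : τ ∈ Icc (0:ℝ) 1) :
    ‖∫ s in (0:ℝ)..τ,
        (α ^ 2 * Real.exp (-α ^ 2 * (τ - s)) * (2 * Real.cos (α ^ 3 * h s) ^ 2 - 1)) • β s‖ ≤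
      (1 / α) * (α ^ 2 * (⨆ s : Icc (0:ℝ) 1, ‖β ↑s‖) + ⨆ s : Icc (0:ℝ) 1, ‖β' ↑s‖) * c⁻¹
        + (1 / α) * (⨆ s : Icc (0:ℝ) 1, ‖β ↑s‖) * ⨆ s : Icc (0:ℝ) 1, |h'' ↑s / (h' ↑s) ^ 2| := by
  have hsub : Icc 0 τ ⊆ Icc (0:ℝ) 1 := Icc_subset_Icc_right hτ.2
  have hh'c : ContinuousOn h' (Icc 0 1) := fun s hs => (hh' s hs).continuousWithinAt
  have hβc : ContinuousOn β (Icc 0 1) := fun s hs => (hβ s hs).continuousWithinAt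
  have hquot : ContinuousOn (fun s => |h'' s / h' s ^ 2|) (Icc 0 1) :=
    (hh''c.div (hh'c.pow 2) fun s hs => pow_ne_zero 2 (hc.trans_le (hge s hs)).ne').abs
  have hsup : ∀ {f : ℝ → ℝ}, ContinuousOn f (Icc 0 1) →
      ∀ s ∈ Icc 0 τ, f s ≤ ⨆ t : Icc (0:ℝ) 1, f t :=
    fun hf s hs => isCompact_Icc.le_ciSup_of_continuousOn hf (hsub hs)
  exact norm_integral_oscillating_le hτ.1 hα hc (fun s hs => (hh s (hsub hs)).mono hsub)
    (fun s hs => (hh' s (hsub hs)).mono hsub) (hh''c.mono hsub) (fun s hs => hge s (hsub hs))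
    (fun s hs => (hβ s (hsub hs)).mono hsub) (hβ'c.mono hsub)
    (hsup hβc.norm) (hsup hβ'c.norm) (hsup hquot)
end
end

section
/- Let K : ℝⁿ × ℝᵐ → ℝ^{n×m} be bounded and Lipschitz continuous in its first argument with constant Lip, uniformly in the second argument. Let u : [0,1] → ℝᵐ be absolutely continuous with |u̇(s)| ≤ M for a.e. s, let γ, γ̃ ∈ L¹([0,1]; ℝⁿ), and set L = 2·Lip·M. Suppose q, Q : [0,1] → ℝⁿ are absolutely continuous with q(0) = Q(0) = q̄, q̇(s) = K(q(s), u(s)) u̇(s) + γ(s) for a.e. s, and Q̇(s) = K(Q(s), u(s)) u̇(s) + γ̃(s) for a.e. s. Then sup_{t∈[0,1]} |q(t) − Q(t)| ≤ 2 e^L · sup_{τ∈[0,1]} | ∫₀^τ ( γ(s) − γ̃(s) ) ds |. -/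
open MeasureTheory Set

noncomputable section

/-!
Subtracting the two integral equations,
`q t - Q t = ∫₀ᵗ (K(q,u) - K(Q,u)) u̇ + ∫₀ᵗ (γ - γ̃)`.
The first integral is at most `Lip·M·∫₀ᵗ |q - Q|` and the second at most
`S = sup_τ |∫₀^τ (γ - γ̃)|`, so Grönwall's inequality gives `|q t - Q t| ≤ S·e^{Lip·M·t}`,
which is below `2 e^{2·Lip·M} S`.
-/

theorem nonneg_of_norm_sub_le_mul_norm_sub {E F : Type*} [NormedAddCommGroup E] [Nontrivial E]
    [NormedAddCommGroup F] {f : E → F} {C : ℝ}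
    (h : ∀ y y', ‖f y - f y'‖ ≤ C * ‖y - y'‖) : 0 ≤ C := by
  obtain ⟨y, hy⟩ := exists_ne (0 : E)
  have := (norm_nonneg _).trans (h y 0)
  rw [sub_zero] at this
  exact nonneg_of_mul_nonneg_left this (norm_pos_iff.2 hy)

section

variable {F : Type*} [NormedAddCommGroup F] [NormedSpace ℝ F]

theorem continuousOn_intervalIntegral_Icc {f : ℝ → F} {a b : ℝ} (hf : IntegrableOn f (Icc a b)) :
    ContinuousOn (fun x => ∫ s in a..x, f s) (Icc a b) := by
  rcases le_or_gt a b with hab | hba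
  · rw [← uIcc_of_le hab] at hf ⊢
    exact intervalIntegral.continuousOn_primitive_interval hf
  · simp [Icc_eq_empty_of_lt hba]

theorem bddAbove_range_norm_intervalIntegral {f : ℝ → F} {a b : ℝ}
    (hf : IntegrableOn f (Icc a b)) :
    BddAbove (range fun τ : Icc a b => ‖∫ s in a..(τ : ℝ), f s‖) := by
  refine ((isCompact_Icc.image_of_continuousOn
    (continuousOn_intervalIntegral_Icc hf).norm).bddAbove).mono ?_
  rintro _ ⟨τ, rfl⟩
  exact ⟨τ, τ.2, rfl⟩

end

theorem add_mul_gronwallBound_zero (K ε x : ℝ) :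
    ε + K * gronwallBound 0 K ε x = ε * Real.exp (K * x) := by
  rcases eq_or_ne K 0 with rfl | hK
  · simp
  · rw [gronwallBound_of_K_ne_0 hK]
    field_simp
    ring

theorem le_mul_exp_of_le_add_mul_integral {ψ : ℝ → ℝ} {a b L S : ℝ}
    (hψ : ContinuousOn ψ (Icc a b)) (hL : 0 ≤ L)
    (h : ∀ t ∈ Icc a b, ψ t ≤ S + L * ∫ s in a..t, ψ s) :
    ∀ t ∈ Icc a b, ψ t ≤ S * Real.exp (L * (t - a)) := by
  set Ψ : ℝ → ℝ := fun x => ∫ s in a..x, ψ s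
  have hΨ' : ∀ x ∈ Ico a b, HasDerivWithinAt Ψ (ψ x) (Ici x) x := by
    intro x hx
    have hxab : x ∈ Icc a b := Ico_subset_Icc_self hx
    have : Fact (x ∈ Icc a b) := ⟨hxab⟩
    have hmem : uIcc a x ⊆ Icc a b := uIcc_subset_Icc (left_mem_Icc.2 (hx.1.trans hx.2.le)) hxab
    refine (intervalIntegral.integral_hasDerivWithinAt_right (s := Icc a b) (t := Icc a b)
      (hψ.mono hmem).intervalIntegrable
      (hψ.stronglyMeasurableAtFilter_nhdsWithin measurableSet_Icc x) (hψ x hxab))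
      |>.mono_of_mem_nhdsWithin ?_
    exact Filter.mem_of_superset (Icc_mem_nhdsGE hx.2) (Icc_subset_Icc_left hx.1)
  have hΨ := le_gronwallBound_of_liminf_deriv_right_le (δ := 0) (K := L) (ε := S)
    (continuousOn_intervalIntegral_Icc hψ.integrableOn_Icc)
    (fun x hx _ hr => (hΨ' x hx).liminf_right_slope_le hr) (by simp)
    (fun x hx => by linarith [h x (Ico_subset_Icc_self hx)])
  intro t ht
  calc ψ t ≤ S + L * Ψ t := h t ht
    _ ≤ S + L * gronwallBound 0 L S (t - a) := by gcongr; exact hΨ t ht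
    _ = S * Real.exp (L * (t - a)) := add_mul_gronwallBound_zero L S (t - a)

namespace AbsCont

variable {F : Type*} [NormedAddCommGroup F] [NormedSpace ℝ F] {a b : ℝ}

theorem continuousOn {f f' : ℝ → F} (h : AbsCont a b f f') : ContinuousOn f (Icc a b) :=
  ((continuousOn_intervalIntegral_Icc h.1).const_add (f a)).congr h.2

theorem norm_sub_le_mul_exp {q Q f g γ γt : ℝ → F} {L S : ℝ}
    (hq : AbsCont a b q (fun s => f s + γ s)) (hQ : AbsCont a b Q (fun s => g s + γt s))
    (hγ : IntegrableOn γ (Icc a b)) (hγt : IntegrableOn γt (Icc a b)) (h₀ : q a = Q a)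
    (hL : 0 ≤ L) (hfg : ∀ᵐ s ∂volume.restrict (Icc a b), ‖f s - g s‖ ≤ L * ‖q s - Q s‖)
    (hS : ∀ t ∈ Icc a b, ‖∫ s in a..t, (γ s - γt s)‖ ≤ S) :
    ∀ t ∈ Icc a b, ‖q t - Q t‖ ≤ S * Real.exp (L * (t - a)) := by
  have hψ : ContinuousOn (fun s => ‖q s - Q s‖) (Icc a b) :=
    (hq.continuousOn.sub hQ.continuousOn).norm
  refine le_mul_exp_of_le_add_mul_integral hψ hL fun t ht => ?_
  have hab : uIcc a t ⊆ Icc a b := uIcc_subset_Icc (left_mem_Icc.2 (ht.1.trans ht.2)) ht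
  have hγ' : IntervalIntegrable γ volume a t := (hγ.mono_set hab).intervalIntegrable
  have hγt' : IntervalIntegrable γt volume a t := (hγt.mono_set hab).intervalIntegrable
  have hf : IntervalIntegrable f volume a t := by
    simpa using ((hq.1.mono_set hab).intervalIntegrable).sub hγ'
  have hg : IntervalIntegrable g volume a t := by
    simpa using ((hQ.1.mono_set hab).intervalIntegrable).sub hγt'
  have hsplit : q t - Q t = (∫ s in a..t, (f s - g s)) + ∫ s in a..t, (γ s - γt s) := by
    rw [hq.2 t ht, hQ.2 t ht, h₀, add_sub_add_left_eq_sub,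
      ← intervalIntegral.integral_sub (hf.add hγ') (hg.add hγt'),
      ← intervalIntegral.integral_add (hf.sub hg) (hγ'.sub hγt')]
    exact intervalIntegral.integral_congr fun s _ => by abel
  have hfg' : ∀ᵐ s, s ∈ Ioc a t → ‖f s - g s‖ ≤ L * ‖q s - Q s‖ :=
    ((ae_restrict_iff' measurableSet_Icc).1 hfg).mono fun s hs hs' =>
      hs (hab (Ioc_subset_Icc_self.trans Icc_subset_uIcc hs'))
  calc ‖q t - Q t‖
      ≤ ‖∫ s in a..t, (f s - g s)‖ + ‖∫ s in a..t, (γ s - γt s)‖ := hsplit ▸ norm_add_le _ _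
    _ ≤ (∫ s in a..t, L * ‖q s - Q s‖) + S := by
      gcongr
      · exact intervalIntegral.norm_integral_le_of_norm_le ht.1 hfg'
          ((hψ.mono hab).intervalIntegrable.const_mul L)
      · exact hS t ht
    _ = S + L * ∫ s in a..t, ‖q s - Q s‖ := by rw [intervalIntegral.integral_const_mul]; ring

end AbsCont

theorem picard_comparison_estimate_general {n m : ℕ}
    (K : Euc n × Euc m → Euc m →L[ℝ] Euc n)
    (Lip M : ℝ)
    (hKlip : ∀ (v : Euc m) (y y' : Euc n), ‖K (y, v) - K (y', v)‖ ≤ Lip * ‖y - y'‖)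
    (u u' : ℝ → Euc m)
    (hM : ∀ᵐ s ∂(volume.restrict (Icc (0:ℝ) 1)), ‖u' s‖ ≤ M)
    (γ γt : ℝ → Euc n)
    (hγ : IntegrableOn γ (Icc 0 1)) (hγt : IntegrableOn γt (Icc 0 1))
    (qbar : Euc n) (q Q : ℝ → Euc n)
    (hq : AbsCont 0 1 q (fun s => K (q s, u s) (u' s) + γ s))
    (hQ : AbsCont 0 1 Q (fun s => K (Q s, u s) (u' s) + γt s))
    (hq0 : q 0 = qbar) (hQ0 : Q 0 = qbar) :
    ∀ t ∈ Icc (0:ℝ) 1, ‖q t - Q t‖ ≤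
      2 * Real.exp (2 * Lip * M) *
        ⨆ τ : Icc (0:ℝ) 1, ‖∫ s in (0:ℝ)..(τ:ℝ), (γ s - γt s)‖ := by
  set S := ⨆ τ : Icc (0:ℝ) 1, ‖∫ s in (0:ℝ)..(τ:ℝ), (γ s - γt s)‖
  have hS₀ : 0 ≤ S := Real.iSup_nonneg fun _ => norm_nonneg _
  -- a negative `Lip` is possible only in `ℝ⁰`
  rcases subsingleton_or_nontrivial (Euc n) with _ | _
  · intro t _
    rw [Subsingleton.elim (q t) (Q t), sub_self, norm_zero]
    positivity
  have hLip : 0 ≤ Lip := nonneg_of_norm_sub_le_mul_norm_sub (f := fun y => K (y, 0)) (hKlip 0)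
  have hM₀ : 0 ≤ M := by
    have : (ae (volume.restrict (Icc (0:ℝ) 1))).NeBot := ae_neBot.2 (by simp [Real.volume_Icc])
    obtain ⟨s, hs⟩ := hM.exists
    exact (norm_nonneg _).trans hs
  have hS : ∀ τ ∈ Icc (0:ℝ) 1, ‖∫ s in (0:ℝ)..τ, (γ s - γt s)‖ ≤ S := fun τ hτ =>
    le_ciSup (bddAbove_range_norm_intervalIntegral (hγ.sub hγt)) ⟨τ, hτ⟩
  have hKu : ∀ᵐ s ∂volume.restrict (Icc (0:ℝ) 1),
      ‖K (q s, u s) (u' s) - K (Q s, u s) (u' s)‖ ≤ Lip * M * ‖q s - Q s‖ :=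
    hM.mono fun s hs => ((K (q s, u s) - K (Q s, u s)).le_of_opNorm_le_of_le
      (hKlip (u s) (q s) (Q s)) hs).trans_eq (by ring)
  intro t ht
  have hexp : Real.exp (Lip * M * (t - 0)) ≤ 2 * Real.exp (2 * Lip * M) := by
    have : Lip * M * (t - 0) ≤ 2 * Lip * M := by
      nlinarith [mul_le_mul_of_nonneg_left ht.2 (mul_nonneg hLip hM₀)]
    linarith [Real.exp_le_exp.2 this, Real.exp_pos (2 * Lip * M)]
  calc ‖q t - Q t‖ ≤ S * Real.exp (Lip * M * (t - 0)) :=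
        hq.norm_sub_le_mul_exp hQ hγ hγt (hq0.trans hQ0.symm) (by positivity) hKu hS t ht
    _ ≤ 2 * Real.exp (2 * Lip * M) * S := by rw [mul_comm _ S]; gcongr

/-- Comparison of two solutions of `ẏ = K(y,u)u̇ + (source)` with sources `γ`, `γ̃`:
`sup |q − Q| ≤ 2 e^L sup_τ |∫₀^τ (γ − γ̃)|`, with `L = 2·Lip·M`. -/
theorem picard_comparison_estimate {n m : ℕ}
    (K : Euc n × Euc m → Euc m →L[ℝ] Euc n)
    (hKcont : Continuous K)
    (MK : ℝ) (hKbdd : ∀ z, ‖K z‖ ≤ MK)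
    (Lip M : ℝ)
    (hKlip : ∀ (v : Euc m) (y y' : Euc n), ‖K (y, v) - K (y', v)‖ ≤ Lip * ‖y - y'‖)
    (u u' : ℝ → Euc m) (hu : AbsCont 0 1 u u')
    (hM : ∀ᵐ s ∂(volume.restrict (Icc (0:ℝ) 1)), ‖u' s‖ ≤ M)
    (γ γt : ℝ → Euc n)
    (hγ : IntegrableOn γ (Icc 0 1)) (hγt : IntegrableOn γt (Icc 0 1))
    (qbar : Euc n) (q Q : ℝ → Euc n)
    (hq : AbsCont 0 1 q (fun s => K (q s, u s) (u' s) + γ s))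
    (hQ : AbsCont 0 1 Q (fun s => K (Q s, u s) (u' s) + γt s))
    (hq0 : q 0 = qbar) (hQ0 : Q 0 = qbar) :
    ∀ t ∈ Icc (0:ℝ) 1, ‖q t - Q t‖ ≤
      2 * Real.exp (2 * Lip * M) *
        ⨆ τ : Icc (0:ℝ) 1, ‖∫ s in (0:ℝ)..(τ:ℝ), (γ s - γt s)‖ :=
  picard_comparison_estimate_general K Lip M hKlip u u' hM γ γt hγ hγt qbar q Q hq hQ hq0 hQ0
end
end

section
/- Let u : [0,T] → ℝ be continuously differentiable and let q : [0,T] → ℝ solve the Cauchy problem q̇(t) = q(t)² · u̇(t)², q(0) = −1. Then q(t) < 0 for all t ∈ [0,T]. In particular, the function t ↦ t − 1 on [0,1], which satisfies the differential inclusion q̇ ∈ Γ(q) with Γ(q) = [0,∞) for q ≠ 0 and Γ(0) = {0}, cannot coincide with any solution of this Cauchy problem. -/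
open Set

/-!
Zero is an equilibrium of `q̇ = q² c(t)`, and the right-hand side is Lipschitz in `q` on
bounded sets, so by uniqueness of solutions no other solution can reach `0` in finite time.
A solution starting at `-1` therefore never vanishes and, by the intermediate value theorem,
stays negative. Since `t ↦ t - 1` reaches `0` at `t = 1`, it is not such a solution.
-/

theorem lipschitzOnWith_sq_mul_closedBall {M C c : ℝ} (hc : ‖c‖ ≤ C) :
    LipschitzOnWith (2 * M * C).toNNReal (fun x : ℝ => x ^ 2 * c) (Metric.closedBall 0 M) := by
  refine LipschitzOnWith.of_dist_le_mul fun x hx y hy => ?_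
  rw [mem_closedBall_zero_iff, Real.norm_eq_abs] at hx hy
  rw [Real.norm_eq_abs] at hc
  have hxy : |x + y| ≤ 2 * M := (abs_add_le x y).trans (by linarith)
  calc dist (x ^ 2 * c) (y ^ 2 * c) = |x + y| * |c| * dist x y := by
        rw [Real.dist_eq, Real.dist_eq, ← sub_mul, sq, sq, mul_self_sub_mul_self, abs_mul,
          abs_mul]
        ring
    _ ≤ 2 * M * C * dist x y := by gcongr; exact (abs_nonneg _).trans hxy
    _ ≤ (2 * M * C).toNNReal * dist x y := by gcongr; exact le_max_left _ _

section

variable {q c : ℝ → ℝ} {a b : ℝ}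

theorem eqOn_zero_of_hasDerivAt_sq_mul_of_eq_zero_right (hc : ContinuousOn c (Icc a b))
    (hq : ∀ t ∈ Icc a b, HasDerivAt q (q t ^ 2 * c t) t) (hb : q b = 0) :
    EqOn q 0 (Icc a b) := by
  have hq_cont : ContinuousOn q (Icc a b) := fun t ht => (hq t ht).continuousAt.continuousWithinAt
  obtain ⟨C, hC⟩ := isCompact_Icc.exists_bound_of_continuousOn hc
  obtain ⟨M, hM⟩ := isCompact_Icc.exists_bound_of_continuousOn hq_cont
  refine ODE_solution_unique_of_mem_Icc_left (v := fun t x => x ^ 2 * c t)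
    (s := fun _ => Metric.closedBall 0 M) (g := fun _ => 0)
    (fun t ht => lipschitzOnWith_sq_mul_closedBall (hC t (Ioc_subset_Icc_self ht)))
    hq_cont (fun t ht => (hq t (Ioc_subset_Icc_self ht)).hasDerivWithinAt)
    (fun t ht => mem_closedBall_zero_iff.2 (hM t (Ioc_subset_Icc_self ht)))
    continuousOn_const (fun t _ => by simpa using hasDerivWithinAt_const t (Iic t) (0 : ℝ))
    (fun t ht => by simpa using (norm_nonneg _).trans (hM t (Ioc_subset_Icc_self ht))) hb

theorem neg_of_hasDerivAt_sq_mul (hc : ContinuousOn c (Icc a b))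
    (hq : ∀ t ∈ Icc a b, HasDerivAt q (q t ^ 2 * c t) t) (ha : q a < 0) :
    ∀ t ∈ Icc a b, q t < 0 := by
  intro t ht
  by_contra! hqt
  have hsub : Icc a t ⊆ Icc a b := Icc_subset_Icc_right ht.2
  obtain ⟨s, hs, hqs⟩ := intermediate_value_Icc ht.1
    (fun x hx => (hq x (hsub hx)).continuousAt.continuousWithinAt) ⟨ha.le, hqt⟩
  have hsub' : Icc a s ⊆ Icc a b := (Icc_subset_Icc_right hs.2).trans hsub
  exact ha.ne <| eqOn_zero_of_hasDerivAt_sq_mul_of_eq_zero_right (hc.mono hsub')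
    (fun x hx => hq x (hsub' hx)) hqs (left_mem_Icc.2 hs.1)

end

theorem negative_solution_example_general
    (T : ℝ)
    (u : ℝ → ℝ) (hu : ContDiff ℝ 1 u)
    (q : ℝ → ℝ)
    (hq : ∀ t ∈ Icc (0:ℝ) T, HasDerivAt q ((q t) ^ 2 * (deriv u t) ^ 2) t)
    (hq0 : q 0 = -1) :
    (∀ t ∈ Icc (0:ℝ) T, q t < 0) ∧
    -- the map `t ↦ t − 1` satisfies the differential inclusion for a.e. `t ∈ [0,1]`
    (∀ t ∈ Ico (0:ℝ) 1,
      HasDerivAt (fun s : ℝ => s - 1) 1 t ∧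
      (1 : ℝ) ∈ (if (t - 1 : ℝ) = 0 then ({0} : Set ℝ) else Ici (0:ℝ))) ∧
    -- but it cannot coincide with `q` on `[0,1]`
    (1 ≤ T → ∃ t ∈ Icc (0:ℝ) 1, q t ≠ t - 1) := by
  have hneg : ∀ t ∈ Icc (0:ℝ) T, q t < 0 :=
    neg_of_hasDerivAt_sq_mul (c := fun t => deriv u t ^ 2)
      ((hu.continuous_deriv le_rfl).pow 2).continuousOn hq (by rw [hq0]; norm_num)
  refine ⟨hneg, fun t ht => ⟨(hasDerivAt_id t).sub_const 1, ?_⟩, fun hT => ⟨1, ?_, ?_⟩⟩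
  · rw [if_neg (sub_ne_zero.2 ht.2.ne)]
    exact mem_Ici.2 zero_le_one
  · exact right_mem_Icc.2 zero_le_one
  · simpa using (hneg 1 ⟨zero_le_one, hT⟩).ne

/-- **Example 1.** For any `C¹` control `u`, the solution of `q̇ = q² u̇²`, `q(0) = −1`
stays strictly negative; in particular the trajectory `t ↦ t − 1` of the
differential inclusion `q̇ ∈ Γ(q)` (with `Γ(q) = [0,∞)` for `q ≠ 0`, `Γ(0) = {0}`)
cannot coincide with any such solution on `[0,1]`. -/
theorem negative_solution_example
    (T : ℝ) (hT : 0 ≤ T)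
    (u : ℝ → ℝ) (hu : ContDiff ℝ 1 u)
    (q : ℝ → ℝ)
    (hq : ∀ t ∈ Icc (0:ℝ) T, HasDerivAt q ((q t) ^ 2 * (deriv u t) ^ 2) t)
    (hq0 : q 0 = -1) :
    (∀ t ∈ Icc (0:ℝ) T, q t < 0) ∧
    -- the map `t ↦ t − 1` satisfies the differential inclusion for a.e. `t ∈ [0,1]`
    (∀ t ∈ Ico (0:ℝ) 1,
      HasDerivAt (fun s : ℝ => s - 1) 1 t ∧
      (1 : ℝ) ∈ (if (t - 1 : ℝ) = 0 then ({0} : Set ℝ) else Ici (0:ℝ))) ∧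
    -- but it cannot coincide with `q` on `[0,1]`
    (1 ≤ T → ∃ t ∈ Icc (0:ℝ) 1, q t ≠ t - 1) :=
  negative_solution_example_general T u hu q hq hq0
end

section
/- Let t ↦ G(t) be a differentiable curve of symmetric positive definite (n+m)×(n+m) real matrices, with block decomposition G = [[G₁₁, G₁₂],[G₂₁, G₂₂]] (G₁₁ of size n×n), inverse Ĝ(t) = G(t)⁻¹ with blocks Ĝ₁₁, Ĝ₁₂, Ĝ₂₁, Ĝ₂₂, and set A = (G₁₁)⁻¹, E = (Ĝ₂₂)⁻¹, K = −A G₁₂. Then at every t, for all p ∈ ℝⁿ and v ∈ ℝᵐ, writing η = E v − E Ĝ₂₁ p and denoting d/dt by a prime, the following scalar identity holds: −½ pᵀ Ĝ₁₁' p − pᵀ Ĝ₁₂' η − ½ ηᵀ Ĝ₂₂' η = −½ pᵀ A' p − pᵀ K' v + ½ vᵀ E' v. -/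
/-!
Write `K = -A G₁₂` and `F = Ĝ₂₂ = E⁻¹`. Block inversion of the symmetric matrix `G` gives
`Ĝ₁₂ = K F`, `Ĝ₂₁ = F Kᵀ` and `Ĝ₁₁ = A + K F Kᵀ`; in particular `η = E v - Kᵀ p`. Differentiating
these identities and `E F = 1` with the product rule expresses `Ĝ₁₁'`, `Ĝ₁₂'` and `E'` through
`A'`, `K'` and `F' = Ĝ₂₂'`. With `w = E v = η + Kᵀ p`, both sides of the identity then reduce to
`-½ pᵀA'p - (K'ᵀp)ᵀ F w - ½ wᵀ F' w`, using the symmetry of `F` and `F'`.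
-/

open Matrix

namespace Matrix

theorem IsSymm.dotProduct_mulVec_comm {R n : Type*} [CommRing R] [Fintype n] {M : Matrix n n R}
    (hM : M.IsSymm) (x y : n → R) : x ⬝ᵥ M *ᵥ y = y ⬝ᵥ M *ᵥ x := by
  rw [← dotProduct_transpose_mulVec, hM.eq]

section Blocks

variable {α l n m o p q : Type*}

theorem toBlocks₁₁_mul [Fintype n] [Fintype m] [NonUnitalNonAssocSemiring α]
    (P : Matrix (l ⊕ o) (n ⊕ m) α) (Q : Matrix (n ⊕ m) (p ⊕ q) α) :
    (P * Q).toBlocks₁₁ = P.toBlocks₁₁ * Q.toBlocks₁₁ + P.toBlocks₁₂ * Q.toBlocks₂₁ := by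
  conv_lhs => rw [← fromBlocks_toBlocks P, ← fromBlocks_toBlocks Q, fromBlocks_multiply,
    toBlocks_fromBlocks₁₁]

theorem toBlocks₁₂_mul [Fintype n] [Fintype m] [NonUnitalNonAssocSemiring α]
    (P : Matrix (l ⊕ o) (n ⊕ m) α) (Q : Matrix (n ⊕ m) (p ⊕ q) α) :
    (P * Q).toBlocks₁₂ = P.toBlocks₁₁ * Q.toBlocks₁₂ + P.toBlocks₁₂ * Q.toBlocks₂₂ := by
  conv_lhs => rw [← fromBlocks_toBlocks P, ← fromBlocks_toBlocks Q, fromBlocks_multiply,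
    toBlocks_fromBlocks₁₂]

theorem IsSymm.toBlocks₂₁ {M : Matrix (n ⊕ m) (n ⊕ m) α} (h : M.IsSymm) :
    M.toBlocks₂₁ = M.toBlocks₁₂ᵀ := by
  ext i j
  exact h.apply (Sum.inl j) (Sum.inr i)

theorem IsSymm.toBlocks₂₂ {M : Matrix (n ⊕ m) (n ⊕ m) α} (h : M.IsSymm) :
    M.toBlocks₂₂.IsSymm :=
  h.submatrix Sum.inr

theorem PosDef.toBlocks₁₁ {R : Type*} [Ring R] [PartialOrder R] [StarRing R]
    {M : Matrix (n ⊕ m) (n ⊕ m) R} (h : M.PosDef) : M.toBlocks₁₁.PosDef :=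
  h.submatrix Sum.inl_injective

theorem PosDef.toBlocks₂₂ {R : Type*} [Ring R] [PartialOrder R] [StarRing R]
    {M : Matrix (n ⊕ m) (n ⊕ m) R} (h : M.PosDef) : M.toBlocks₂₂.PosDef :=
  h.submatrix Sum.inr_injective

variable [Fintype n] [Fintype m] [CommRing α] [DecidableEq n] [DecidableEq m]
  {M : Matrix (n ⊕ m) (n ⊕ m) α}

theorem inv_toBlocks₁₂_eq (hM : IsUnit M.det) (hM₁₁ : IsUnit M.toBlocks₁₁.det) :
    M⁻¹.toBlocks₁₂ = -(M.toBlocks₁₁⁻¹ * M.toBlocks₁₂) * M⁻¹.toBlocks₂₂ := by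
  have h : M.toBlocks₁₁ * M⁻¹.toBlocks₁₂ + M.toBlocks₁₂ * M⁻¹.toBlocks₂₂ = 0 := by
    rw [← toBlocks₁₂_mul, mul_nonsing_inv M hM, ← fromBlocks_one, toBlocks_fromBlocks₁₂]
  calc M⁻¹.toBlocks₁₂ = M.toBlocks₁₁⁻¹ * (M.toBlocks₁₁ * M⁻¹.toBlocks₁₂) :=
        (nonsing_inv_mul_cancel_left _ _ hM₁₁).symm
    _ = _ := by
      rw [eq_neg_of_add_eq_zero_left h, Matrix.mul_neg, Matrix.neg_mul, Matrix.mul_assoc]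

theorem inv_toBlocks₁₁_eq (hM : IsUnit M.det) (hM₁₁ : IsUnit M.toBlocks₁₁.det) :
    M⁻¹.toBlocks₁₁ = M.toBlocks₁₁⁻¹ + -(M.toBlocks₁₁⁻¹ * M.toBlocks₁₂) * M⁻¹.toBlocks₂₁ := by
  have h : M.toBlocks₁₁ * M⁻¹.toBlocks₁₁ + M.toBlocks₁₂ * M⁻¹.toBlocks₂₁ = 1 := by
    rw [← toBlocks₁₁_mul, mul_nonsing_inv M hM, ← fromBlocks_one, toBlocks_fromBlocks₁₁]
  calc M⁻¹.toBlocks₁₁ = M.toBlocks₁₁⁻¹ * (M.toBlocks₁₁ * M⁻¹.toBlocks₁₁) :=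
        (nonsing_inv_mul_cancel_left _ _ hM₁₁).symm
    _ = _ := by
      rw [eq_sub_of_add_eq h, Matrix.mul_sub, Matrix.mul_one, sub_eq_add_neg, Matrix.neg_mul,
        Matrix.mul_assoc]

theorem IsSymm.inv_toBlocks₂₁_eq (hS : M.IsSymm) (hM : IsUnit M.det)
    (hM₁₁ : IsUnit M.toBlocks₁₁.det) :
    M⁻¹.toBlocks₂₁ = M⁻¹.toBlocks₂₂ * (-(M.toBlocks₁₁⁻¹ * M.toBlocks₁₂))ᵀ := by
  rw [hS.inv.toBlocks₂₁, inv_toBlocks₁₂_eq hM hM₁₁, transpose_mul, hS.inv.toBlocks₂₂.eq]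

theorem IsSymm.inv_toBlocks₁₁_eq (hS : M.IsSymm) (hM : IsUnit M.det)
    (hM₁₁ : IsUnit M.toBlocks₁₁.det) :
    M⁻¹.toBlocks₁₁ = M.toBlocks₁₁⁻¹ + -(M.toBlocks₁₁⁻¹ * M.toBlocks₁₂) * M⁻¹.toBlocks₂₂ *
      (-(M.toBlocks₁₁⁻¹ * M.toBlocks₁₂))ᵀ := by
  rw [Matrix.inv_toBlocks₁₁_eq hM hM₁₁, hS.inv_toBlocks₂₁_eq hM hM₁₁, Matrix.mul_assoc]

end Blocks

section EntrywiseDeriv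

variable {𝕜 ι κ μ : Type*} [NontriviallyNormedField 𝕜]

/-- Matrices carry no canonical norm, so curves of matrices are differentiated entry by entry. -/
def HasEntrywiseDerivAt (M : 𝕜 → Matrix ι κ 𝕜) (M' : Matrix ι κ 𝕜) (t : 𝕜) : Prop :=
  ∀ i j, HasDerivAt (fun s => M s i j) (M' i j) t

namespace HasEntrywiseDerivAt

variable {M N : 𝕜 → Matrix ι κ 𝕜} {M' N' : Matrix ι κ 𝕜} {t : 𝕜}

theorem unique (hM : HasEntrywiseDerivAt M M' t) (hN : HasEntrywiseDerivAt M N' t) : M' = N' :=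
  ext fun i j => (hM i j).unique (hN i j)

theorem congr (hM : HasEntrywiseDerivAt M M' t) (h : ∀ s, M s = N s) :
    HasEntrywiseDerivAt N M' t :=
  funext h ▸ hM

theorem add (hM : HasEntrywiseDerivAt M M' t) (hN : HasEntrywiseDerivAt N N' t) :
    HasEntrywiseDerivAt (fun s => M s + N s) (M' + N') t :=
  fun i j => (hM i j).add (hN i j)

theorem transpose (hM : HasEntrywiseDerivAt M M' t) :
    HasEntrywiseDerivAt (fun s => (M s)ᵀ) M'ᵀ t :=
  fun i j => hM j i

theorem mul [Fintype κ] {N : 𝕜 → Matrix κ μ 𝕜} {N' : Matrix κ μ 𝕜}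
    (hM : HasEntrywiseDerivAt M M' t) (hN : HasEntrywiseDerivAt N N' t) :
    HasEntrywiseDerivAt (fun s => M s * N s) (M' * N t + M t * N') t := by
  intro i j
  simp only [mul_apply, add_apply, ← Finset.sum_add_distrib]
  exact HasDerivAt.fun_sum fun k _ => (hM i k).mul (hN k j)

theorem isSymm {M : 𝕜 → Matrix ι ι 𝕜} {M' : Matrix ι ι 𝕜}
    (hM : HasEntrywiseDerivAt M M' t) (hS : ∀ s, (M s).IsSymm) : M'.IsSymm :=
  hM.transpose.unique (hM.congr fun s => (hS s).eq.symm)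

theorem inv_eq [Fintype ι] [DecidableEq ι] {M : 𝕜 → Matrix ι ι 𝕜} {M' Minv' : Matrix ι ι 𝕜}
    (hM : HasEntrywiseDerivAt M M' t) (hMinv : HasEntrywiseDerivAt (fun s => (M s)⁻¹) Minv' t)
    (hdet : ∀ s, IsUnit (M s).det) : Minv' = -((M t)⁻¹ * M' * (M t)⁻¹) := by
  have hconst : HasEntrywiseDerivAt (fun _ => (1 : Matrix ι ι 𝕜)) 0 t :=
    fun i j => hasDerivAt_const t _
  have h : Minv' * M t + (M t)⁻¹ * M' = 0 :=
    (hMinv.mul hM).unique (hconst.congr fun s => (nonsing_inv_mul _ (hdet s)).symm)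
  calc Minv' = (Minv' * M t) * (M t)⁻¹ := (mul_nonsing_inv_cancel_right _ _ (hdet t)).symm
    _ = _ := by rw [eq_neg_of_add_eq_zero_left h, Matrix.neg_mul]

end HasEntrywiseDerivAt

end EntrywiseDeriv

end Matrix

theorem momentum_quadratic_identity {R n m : Type*} [Field R] [CharZero R] [Fintype n] [Fintype m]
    [DecidableEq m]
    (dA : Matrix n n R) (K dK : Matrix n m R) (F dF : Matrix m m R) (hF : IsUnit F.det)
    (hFS : F.IsSymm) (hdFS : dF.IsSymm) (p : n → R) (v : m → R) :
    let η := F⁻¹ *ᵥ v - Kᵀ *ᵥ p;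
    -(1 / 2) * (p ⬝ᵥ (dA + dK * F * Kᵀ + K * dF * Kᵀ + K * F * dKᵀ) *ᵥ p)
        - p ⬝ᵥ (dK * F + K * dF) *ᵥ η - 1 / 2 * (η ⬝ᵥ dF *ᵥ η)
      = -(1 / 2) * (p ⬝ᵥ dA *ᵥ p) - p ⬝ᵥ dK *ᵥ v
        + 1 / 2 * (v ⬝ᵥ (-(F⁻¹ * dF * F⁻¹)) *ᵥ v) := by
  intro η
  have hw : F⁻¹ *ᵥ v = η + Kᵀ *ᵥ p := (sub_add_cancel _ _).symm
  have hv : v = F *ᵥ (η + Kᵀ *ᵥ p) := by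
    rw [← hw, mulVec_mulVec, mul_nonsing_inv _ hF, one_mulVec]
  have hp (X : Matrix n m R) (y : m → R) : p ⬝ᵥ X *ᵥ y = (Xᵀ *ᵥ p) ⬝ᵥ y := by
    rw [dotProduct_mulVec, mulVec_transpose]
  have hvF (y : m → R) : v ⬝ᵥ F⁻¹ *ᵥ y = (F⁻¹ *ᵥ v) ⬝ᵥ y := by
    rw [dotProduct_mulVec, ← mulVec_transpose, hFS.inv.eq]
  simp only [Matrix.mul_assoc, add_mulVec, dotProduct_add, ← mulVec_mulVec, hp, hvF, neg_mulVec,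
    dotProduct_neg]
  rw [hw, hv, hFS.dotProduct_mulVec_comm (Kᵀ *ᵥ p) (dKᵀ *ᵥ p)]
  simp only [mulVec_add, dotProduct_add, add_dotProduct]
  rw [hdFS.dotProduct_mulVec_comm η (Kᵀ *ᵥ p)]
  ring

theorem momentum_equation_identity_general {n m : ℕ}
    (G : ℝ → Matrix (Fin n ⊕ Fin m) (Fin n ⊕ Fin m) ℝ)
    (hpos : ∀ t, (G t).PosDef)
    (t₀ : ℝ)
    (dH11 dA : Matrix (Fin n) (Fin n) ℝ)
    (dH12 dK : Matrix (Fin n) (Fin m) ℝ)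
    (dH22 dE : Matrix (Fin m) (Fin m) ℝ)
    (h11 : ∀ i j, HasDerivAt (fun t => ((G t)⁻¹).toBlocks₁₁ i j) (dH11 i j) t₀)
    (h12 : ∀ i j, HasDerivAt (fun t => ((G t)⁻¹).toBlocks₁₂ i j) (dH12 i j) t₀)
    (h22 : ∀ i j, HasDerivAt (fun t => ((G t)⁻¹).toBlocks₂₂ i j) (dH22 i j) t₀)
    (hA : ∀ i j, HasDerivAt (fun t => ((G t).toBlocks₁₁)⁻¹ i j) (dA i j) t₀)
    (hK : ∀ i j,
      HasDerivAt (fun t => (-(((G t).toBlocks₁₁)⁻¹ * (G t).toBlocks₁₂)) i j) (dK i j) t₀)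
    (hE : ∀ i j, HasDerivAt (fun t => (((G t)⁻¹).toBlocks₂₂)⁻¹ i j) (dE i j) t₀)
    (p : Fin n → ℝ) (v : Fin m → ℝ) :
    let E₀ := (((G t₀)⁻¹).toBlocks₂₂)⁻¹;
    let η := E₀.mulVec v - (E₀ * ((G t₀)⁻¹).toBlocks₂₁).mulVec p;
    (-(1 / 2) * (p ⬝ᵥ dH11.mulVec p) - p ⬝ᵥ dH12.mulVec η
        - (1 / 2) * (η ⬝ᵥ dH22.mulVec η)
      = -(1 / 2) * (p ⬝ᵥ dA.mulVec p) - p ⬝ᵥ dK.mulVec v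
        + (1 / 2) * (v ⬝ᵥ dE.mulVec v)) := by
  intro E₀ η
  set F₀ := ((G t₀)⁻¹).toBlocks₂₂
  set K₀ := -((G t₀).toBlocks₁₁⁻¹ * (G t₀).toBlocks₁₂)
  have hS t : (G t).IsSymm :=
    (conjTranspose_eq_transpose_of_trivial _).symm.trans (hpos t).isHermitian
  have hdet t : IsUnit (G t).det := (hpos t).det_pos.ne'.isUnit
  have hdet₁₁ t : IsUnit (G t).toBlocks₁₁.det := (hpos t).toBlocks₁₁.det_pos.ne'.isUnit
  have hdet₂₂ t : IsUnit ((G t)⁻¹).toBlocks₂₂.det := (hpos t).inv.toBlocks₂₂.det_pos.ne'.isUnit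
  have hdH22 : dH22.IsSymm := HasEntrywiseDerivAt.isSymm h22 fun t => (hS t).inv.toBlocks₂₂
  have hdH12 : dH12 = dK * F₀ + K₀ * dH22 :=
    HasEntrywiseDerivAt.unique h12 <| (HasEntrywiseDerivAt.mul hK h22).congr fun t =>
      (inv_toBlocks₁₂_eq (hdet t) (hdet₁₁ t)).symm
  have hdH11 : dH11 = dA + dK * F₀ * K₀ᵀ + K₀ * dH22 * K₀ᵀ + K₀ * F₀ * dKᵀ := by
    have h := (HasEntrywiseDerivAt.add hA ((HasEntrywiseDerivAt.mul hK h22).mul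
      (HasEntrywiseDerivAt.transpose hK))).congr fun t =>
        ((hS t).inv_toBlocks₁₁_eq (hdet t) (hdet₁₁ t)).symm
    rw [HasEntrywiseDerivAt.unique h11 h]
    simp only [Matrix.add_mul, add_assoc, F₀, K₀]
  have hdE : dE = -(E₀ * dH22 * E₀) :=
    HasEntrywiseDerivAt.inv_eq (M := fun t => ((G t)⁻¹).toBlocks₂₂) h22 hE hdet₂₂
  have hη : η = E₀ *ᵥ v - K₀ᵀ *ᵥ p := by
    simp only [η, (hS t₀).inv_toBlocks₂₁_eq (hdet t₀) (hdet₁₁ t₀), ← Matrix.mul_assoc,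
      nonsing_inv_mul _ (hdet₂₂ t₀), Matrix.one_mul, E₀, K₀]
  rw [hη, hdH11, hdH12, hdE]
  exact momentum_quadratic_identity dA K₀ dK F₀ dH22 (hdet₂₂ t₀) (hS t₀).inv.toBlocks₂₂ hdH22 p v

/-- Derivation of the momentum equation: along a differentiable curve of symmetric
positive definite matrices `G(t)`, with `Ĝ = G⁻¹`, `A = (G₁₁)⁻¹`, `E = (Ĝ₂₂)⁻¹`,
`K = −A G₁₂`, and `η = E v − E Ĝ₂₁ p`, the quadratic forms built from the
derivatives satisfy
`−½ pᵀĜ₁₁'p − pᵀĜ₁₂'η − ½ ηᵀĜ₂₂'η = −½ pᵀA'p − pᵀK'v + ½ vᵀE'v`. -/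
theorem momentum_equation_identity {n m : ℕ}
    (G : ℝ → Matrix (Fin n ⊕ Fin m) (Fin n ⊕ Fin m) ℝ)
    (hpos : ∀ t, (G t).PosDef) (hsymm : ∀ t, (G t).IsSymm)
    (t₀ : ℝ)
    (dH11 dA : Matrix (Fin n) (Fin n) ℝ)
    (dH12 dK : Matrix (Fin n) (Fin m) ℝ)
    (dH22 dE : Matrix (Fin m) (Fin m) ℝ)
    (h11 : ∀ i j, HasDerivAt (fun t => ((G t)⁻¹).toBlocks₁₁ i j) (dH11 i j) t₀)
    (h12 : ∀ i j, HasDerivAt (fun t => ((G t)⁻¹).toBlocks₁₂ i j) (dH12 i j) t₀)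
    (h22 : ∀ i j, HasDerivAt (fun t => ((G t)⁻¹).toBlocks₂₂ i j) (dH22 i j) t₀)
    (hA : ∀ i j, HasDerivAt (fun t => ((G t).toBlocks₁₁)⁻¹ i j) (dA i j) t₀)
    (hK : ∀ i j,
      HasDerivAt (fun t => (-(((G t).toBlocks₁₁)⁻¹ * (G t).toBlocks₁₂)) i j) (dK i j) t₀)
    (hE : ∀ i j, HasDerivAt (fun t => (((G t)⁻¹).toBlocks₂₂)⁻¹ i j) (dE i j) t₀)
    (p : Fin n → ℝ) (v : Fin m → ℝ) :
    let E₀ := (((G t₀)⁻¹).toBlocks₂₂)⁻¹;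
    let η := E₀.mulVec v - (E₀ * ((G t₀)⁻¹).toBlocks₂₁).mulVec p;
    (-(1 / 2) * (p ⬝ᵥ dH11.mulVec p) - p ⬝ᵥ dH12.mulVec η
        - (1 / 2) * (η ⬝ᵥ dH22.mulVec η)
      = -(1 / 2) * (p ⬝ᵥ dA.mulVec p) - p ⬝ᵥ dK.mulVec v
        + (1 / 2) * (v ⬝ᵥ dE.mulVec v)) :=
  momentum_equation_identity_general G hpos t₀ dH11 dA dH12 dK dH22 dE h11 h12 h22 hA hK hE p v
end
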